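/- arXiv:q-alg/9610021 — 10 statements merged into one kernel-verified Lean document; each statement's English description precedes it below -/
import Mathlib

section
/- The element r = a⊗a⁺ − e⊗n in U(H(4))⊗U(H(4)), where H(4) is the Heisenberg Lie algebra with generators n, e, a⁺, a satisfying [a,a⁺]=e, [n,a]=−a, [n,a⁺]=a⁺, [e,·]=0, satisfies the classical Yang-Baxter equation [r₁₂,r₁₃]+[r₁₂,r₂₃]+[r₁₃,r₂₃]=0. -/
/-!
STATEMENT 0: The element `r = a ⊗ a⁺ − e ⊗ n` in `U(H(4)) ⊗ U(H(4))` satisfies the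
classical Yang–Baxter equation.  We formalize this for an arbitrary associative
unital ℂ-algebra `U` containing elements `n, e, ap, a` satisfying the defining
bracket relations of the Heisenberg Lie algebra H(4) (this covers in particular
the universal enveloping algebra `U(H(4))`), with `r₁₂, r₁₃, r₂₃` the standard
embeddings into the triple tensor product. -/

open TensorProduct

theorem stmt0 (U : Type*) [Ring U] [Algebra ℂ U]
    (n e ap a : U)
    (h_aap : ⁅a, ap⁆ = e)
    (h_na : ⁅n, a⁆ = -a)
    (h_nap : ⁅n, ap⁆ = ap)
    (h_e : ∀ x : U, ⁅e, x⁆ = 0) :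
    let r12 : U ⊗[ℂ] (U ⊗[ℂ] U) := a ⊗ₜ (ap ⊗ₜ 1) - e ⊗ₜ (n ⊗ₜ 1)
    let r13 : U ⊗[ℂ] (U ⊗[ℂ] U) := a ⊗ₜ ((1 : U) ⊗ₜ ap) - e ⊗ₜ ((1 : U) ⊗ₜ n)
    let r23 : U ⊗[ℂ] (U ⊗[ℂ] U) := (1 : U) ⊗ₜ (a ⊗ₜ ap) - (1 : U) ⊗ₜ (e ⊗ₜ n)
    ⁅r12, r13⁆ + ⁅r12, r23⁆ + ⁅r13, r23⁆ = 0 := by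
  intro r12 r13 r23
  have haap : a*ap = e + ap*a := by have := h_aap; rw [Ring.lie_def, sub_eq_iff_eq_add] at this; exact this
  have hna : n*a = -a + a*n := by have := h_na; rw [Ring.lie_def, sub_eq_iff_eq_add] at this; exact this
  have hnap : n*ap = ap + ap*n := by have := h_nap; rw [Ring.lie_def, sub_eq_iff_eq_add] at this; exact this
  have hea : e*a = a*e := by have := h_e a; rw [Ring.lie_def, sub_eq_zero] at this; exact this
  have hen : e*n = n*e := by have := h_e n; rw [Ring.lie_def, sub_eq_zero] at this; exact this
  have heap : e*ap = ap*e := by have := h_e ap; rw [Ring.lie_def, sub_eq_zero] at this; exact this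
  simp only [r12, r13, r23, Ring.lie_def, mul_sub, sub_mul, Algebra.TensorProduct.tmul_mul_tmul,
    one_mul, mul_one, haap, hna, hnap, hea, hen, heap]
  simp only [tmul_add, add_tmul, tmul_sub, sub_tmul, tmul_neg, neg_tmul]
  abel
end

section
/- The element r = n⊗a⁺ − a⁺⊗n in U(H(4))⊗U(H(4)) satisfies the classical Yang-Baxter equation [r₁₂,r₁₃]+[r₁₂,r₂₃]+[r₁₃,r₂₃]=0. -/
/-!
STATEMENT 1: The element `r = n ⊗ a⁺ − a⁺ ⊗ n` in `U(H(4)) ⊗ U(H(4))` satisfies the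
classical Yang–Baxter equation.  Formalized for an arbitrary associative unital
ℂ-algebra `U` containing elements `n, e, ap, a` satisfying the defining bracket
relations of the Heisenberg Lie algebra H(4) (covering `U(H(4))`). -/

open TensorProduct

theorem stmt1 (U : Type*) [Ring U] [Algebra ℂ U]
    (n e ap a : U)
    (h_aap : ⁅a, ap⁆ = e)
    (h_na : ⁅n, a⁆ = -a)
    (h_nap : ⁅n, ap⁆ = ap)
    (h_e : ∀ x : U, ⁅e, x⁆ = 0) :
    let r12 : U ⊗[ℂ] (U ⊗[ℂ] U) := n ⊗ₜ[ℂ] (ap ⊗ₜ[ℂ] (1 : U)) - ap ⊗ₜ[ℂ] (n ⊗ₜ[ℂ] (1 : U))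
    let r13 : U ⊗[ℂ] (U ⊗[ℂ] U) := n ⊗ₜ[ℂ] ((1 : U) ⊗ₜ[ℂ] ap) - ap ⊗ₜ[ℂ] ((1 : U) ⊗ₜ[ℂ] n)
    let r23 : U ⊗[ℂ] (U ⊗[ℂ] U) := (1 : U) ⊗ₜ[ℂ] (n ⊗ₜ[ℂ] ap) - (1 : U) ⊗ₜ[ℂ] (ap ⊗ₜ[ℂ] n)
    ⁅r12, r13⁆ + ⁅r12, r23⁆ + ⁅r13, r23⁆ = 0 := by
  intro r12 r13 r23
  have h : n * ap = ap * n + ap := by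
    have := h_nap; rw [Ring.lie_def, sub_eq_iff_eq_add] at this; rw [this, add_comm]
  simp only [r12, r13, r23, Ring.lie_def, mul_sub, sub_mul,
    Algebra.TensorProduct.tmul_mul_tmul, one_mul, mul_one, h]
  simp only [add_mul, mul_add, add_tmul, tmul_add]
  abel
end

section
/- For any complex numbers h and w, the element r(h,w) = 2h(a⊗a⁺ − e⊗n) + w(n⊗a⁺ − a⁺⊗n) in U(H(4))⊗U(H(4)) satisfies the classical Yang-Baxter equation [r₁₂,r₁₃]+[r₁₂,r₂₃]+[r₁₃,r₂₃]=0. -/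
/-!
STATEMENT 2: For any complex numbers `h, w`, the element
`r(h,w) = 2h(a ⊗ a⁺ − e ⊗ n) + w(n ⊗ a⁺ − a⁺ ⊗ n)` in `U(H(4)) ⊗ U(H(4))` satisfies
the classical Yang–Baxter equation.  Formalized for an arbitrary associative unital
ℂ-algebra `U` containing elements `n, e, ap, a` satisfying the defining bracket
relations of the Heisenberg Lie algebra H(4) (covering `U(H(4))`). -/

open TensorProduct

theorem stmt2 (U : Type*) [Ring U] [Algebra ℂ U]
    (h w : ℂ)
    (n e ap a : U)
    (h_aap : ⁅a, ap⁆ = e)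
    (h_na : ⁅n, a⁆ = -a)
    (h_nap : ⁅n, ap⁆ = ap)
    (h_e : ∀ x : U, ⁅e, x⁆ = 0) :
    let r12 : U ⊗[ℂ] (U ⊗[ℂ] U) :=
      (2 * h) • (a ⊗ₜ (ap ⊗ₜ 1) - e ⊗ₜ (n ⊗ₜ 1)) + w • (n ⊗ₜ (ap ⊗ₜ 1) - ap ⊗ₜ (n ⊗ₜ 1))
    let r13 : U ⊗[ℂ] (U ⊗[ℂ] U) :=
      (2 * h) • (a ⊗ₜ ((1 : U) ⊗ₜ ap) - e ⊗ₜ ((1 : U) ⊗ₜ n)) +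
        w • (n ⊗ₜ ((1 : U) ⊗ₜ ap) - ap ⊗ₜ ((1 : U) ⊗ₜ n))
    let r23 : U ⊗[ℂ] (U ⊗[ℂ] U) :=
      (2 * h) • ((1 : U) ⊗ₜ (a ⊗ₜ ap) - (1 : U) ⊗ₜ (e ⊗ₜ n)) +
        w • ((1 : U) ⊗ₜ (n ⊗ₜ ap) - (1 : U) ⊗ₜ (ap ⊗ₜ n))
    ⁅r12, r13⁆ + ⁅r12, r23⁆ + ⁅r13, r23⁆ = 0 := by
  intro r12 r13 r23
  rw [Ring.lie_def] at h_aap h_na h_nap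
  have haap : a * ap = ap * a + e := by
    rw [sub_eq_iff_eq_add.mp h_aap]; abel
  have hna : n * a = a * n - a := by
    rw [sub_eq_iff_eq_add.mp h_na]; abel
  have hnap : n * ap = ap * n + ap := by
    rw [sub_eq_iff_eq_add.mp h_nap]; abel
  have hen : e * n = n * e := sub_eq_zero.mp (by rw [← Ring.lie_def]; exact h_e n)
  have hea : e * a = a * e := sub_eq_zero.mp (by rw [← Ring.lie_def]; exact h_e a)
  have heap : e * ap = ap * e := sub_eq_zero.mp (by rw [← Ring.lie_def]; exact h_e ap)
  simp only [Ring.lie_def, r12, r13, r23, add_mul, mul_add, sub_mul, mul_sub,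
    smul_mul_assoc, mul_smul_comm, Algebra.TensorProduct.tmul_mul_tmul, one_mul, mul_one,
    smul_sub, smul_add, smul_smul, haap, hna, hnap, hen, hea, heap,
    tmul_sub, sub_tmul, tmul_add, add_tmul]
  module
end

section
/- For any complex numbers μ, ν, the element r(μ,ν) = μ(a⊗e − e⊗a) + ν(a⁺⊗e − e⊗a⁺) satisfies the classical Yang-Baxter equation in U(H(4))⊗U(H(4))⊗U(H(4)). -/
/-!
STATEMENT 3: For any complex numbers `μ, ν`, the element
`r(μ,ν) = μ(a ⊗ e − e ⊗ a) + ν(a⁺ ⊗ e − e ⊗ a⁺)` satisfies the classical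
Yang–Baxter equation in `U(H(4))⊗U(H(4))⊗U(H(4))`.  Formalized for an arbitrary
associative unital ℂ-algebra `U` containing elements `n, e, ap, a` satisfying the
defining bracket relations of the Heisenberg Lie algebra H(4). -/

open TensorProduct

theorem stmt3 (U : Type*) [Ring U] [Algebra ℂ U]
    (μ ν : ℂ)
    (n e ap a : U)
    (h_aap : ⁅a, ap⁆ = e)
    (h_na : ⁅n, a⁆ = -a)
    (h_nap : ⁅n, ap⁆ = ap)
    (h_e : ∀ x : U, ⁅e, x⁆ = 0) :
    let r12 : U ⊗[ℂ] (U ⊗[ℂ] U) :=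
      μ • (a ⊗ₜ (e ⊗ₜ 1) - e ⊗ₜ (a ⊗ₜ 1)) + ν • (ap ⊗ₜ (e ⊗ₜ 1) - e ⊗ₜ (ap ⊗ₜ 1))
    let r13 : U ⊗[ℂ] (U ⊗[ℂ] U) :=
      μ • (a ⊗ₜ ((1 : U) ⊗ₜ e) - e ⊗ₜ ((1 : U) ⊗ₜ a)) +
        ν • (ap ⊗ₜ ((1 : U) ⊗ₜ e) - e ⊗ₜ ((1 : U) ⊗ₜ ap))
    let r23 : U ⊗[ℂ] (U ⊗[ℂ] U) :=
      μ • ((1 : U) ⊗ₜ (a ⊗ₜ e) - (1 : U) ⊗ₜ (e ⊗ₜ a)) +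
        ν • ((1 : U) ⊗ₜ (ap ⊗ₜ e) - (1 : U) ⊗ₜ (e ⊗ₜ ap))
    ⁅r12, r13⁆ + ⁅r12, r23⁆ + ⁅r13, r23⁆ = 0 := by
  intro r12 r13 r23
  have hea : ∀ x : U, e * x = x * e := fun x => by
    have h := h_e x; rw [Ring.lie_def, sub_eq_zero] at h; exact h
  have haap : a * ap = ap * a + e := by
    rw [Ring.lie_def] at h_aap; exact add_comm (ap*a) e ▸ eq_add_of_sub_eq h_aap
  simp only [r12, r13, r23, Ring.lie_def, mul_add, add_mul, mul_sub, sub_mul,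
    smul_mul_assoc, mul_smul_comm, Algebra.TensorProduct.tmul_mul_tmul,
    mul_one, one_mul, hea a, hea ap, haap, smul_smul, mul_comm μ ν,
    tmul_add, add_tmul, smul_sub, smul_add]
  abel
end

section
/- In the quantum algebra U_{h,w}(H(4)) with relations [A,A⁺] = sinh(hE)e^{wA⁺}/h, [N,A⁺] = (e^{wA⁺}−1)/w, [N,A] = −A and E central, the element C_{h,w} = N·sinh(hE)/h + ((e^{−wA⁺}−1)/(2w))·A + A·((e^{−wA⁺}−1)/(2w)) commutes with each of the generators N, E, A⁺, A, i.e. is central. -/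
/-!
STATEMENT 4: In `U_{h,w}(H(4))`, the element
`C_{h,w} = N·sinh(hE)/h + ((e^{−wA⁺}−1)/(2w))·A + A·((e^{−wA⁺}−1)/(2w))` is central,
i.e. it commutes with each of the generators `N, E, A⁺, A`.

We formalize the algebra with formal exponentials as a complete normed ℂ-algebra `U`
containing elements `N, E, Ap, A` satisfying the defining relations, with
`sinh(hE)/h = (exp(hE) − exp(−hE))/(2h)` and `(e^{±wA⁺}−1)/w` defined via the
exponential `NormedSpace.exp ℂ` (h, w nonzero scalars). -/

open NormedSpace

/-- Leibniz rule for the ring commutator. -/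
lemma mulLie {U : Type*} [Ring U] (a b c : U) : ⁅a*b, c⁆ = a*⁅b,c⁆ + ⁅a,c⁆*b := by
  simp only [Ring.lie_def]; noncomm_ring

/-- If `[X,Y]` commutes with `Y`, then `[X, exp Y] = exp Y * [X,Y]`. -/
lemma lie_exp_aux {U : Type*} [NormedRing U] [NormedAlgebra ℂ U] [CompleteSpace U]
    (X Y : U) (hc : Y * (X*Y - Y*X) = (X*Y - Y*X) * Y) :
    X * NormedSpace.exp Y - NormedSpace.exp Y * X = NormedSpace.exp Y * (X*Y - Y*X) := by
  set K := X*Y - Y*X with hK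
  have hpow : ∀ n : ℕ, X * Y^(n+1) - Y^(n+1) * X = (n+1) • (Y^n * K) := by
    intro n; induction n with
    | zero => simp [hK]
    | succ n ih =>
      have h2 : X * Y^(n+2) - Y^(n+2) * X = (X * Y^(n+1) - Y^(n+1)*X) * Y + Y^(n+1) * K := by
        rw [hK, pow_succ Y (n+1)]; noncomm_ring
      rw [h2, ih, smul_mul_assoc, mul_assoc, ← hc, ← mul_assoc, ← pow_succ,
        succ_nsmul (Y^(n+1) * K) (n+1)]
  set L : U →L[ℂ] U := (ContinuousLinearMap.mul ℂ U) X - (ContinuousLinearMap.mul ℂ U).flip X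
    with hLdef
  have hL : ∀ z : U, L z = X * z - z * X := by intro z; simp [hLdef]
  have hs : Summable (fun n : ℕ => ((n.factorial : ℂ))⁻¹ • Y ^ n) := expSeries_summable' Y
  have hexp : NormedSpace.exp Y = ∑' n : ℕ, ((n.factorial : ℂ))⁻¹ • Y ^ n := by rw [exp_eq_tsum ℂ]
  have hsum2 : Summable (fun n : ℕ => L (((n.factorial : ℂ))⁻¹ • Y ^ n)) :=
    hs.map (L : U →L[ℂ] U) L.continuous
  have h1 : X * NormedSpace.exp Y - NormedSpace.exp Y * X = ∑' n : ℕ, L (((n.factorial : ℂ))⁻¹ • Y ^ n) := by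
    rw [← hL, hexp, L.map_tsum hs]
  have h0 : L (((Nat.factorial 0 : ℂ))⁻¹ • Y ^ 0) = 0 := by
    rw [hL]; simp
  have h3 : ∀ n : ℕ, L ((((n+1).factorial : ℂ))⁻¹ • Y ^ (n+1)) = (((n.factorial : ℂ))⁻¹ • Y ^ n) * K := by
    intro n
    rw [map_smul, hL, hpow, ← Nat.cast_smul_eq_nsmul ℂ, smul_smul, smul_mul_assoc]
    congr 1
    have hn : ((n.factorial : ℂ)) ≠ 0 := Nat.cast_ne_zero.mpr n.factorial_ne_zero
    have hn1 : ((n : ℂ) + 1) ≠ 0 := Nat.cast_add_one_ne_zero n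
    rw [Nat.factorial_succ]
    push_cast
    field_simp
  rw [h1, hsum2.tsum_eq_zero_add, h0, zero_add, tsum_congr h3,
    hs.tsum_mul_right K, ← hexp]

theorem stmt4 (U : Type*) [NormedRing U] [NormedAlgebra ℂ U] [CompleteSpace U]
    (h w : ℂ) (hh : h ≠ 0) (hw : w ≠ 0)
    (N E Ap A : U)
    -- sinh(hE)/h and (e^{wA⁺}−1)/w as elements of U
    (sinhE expwAp expmwAp : U)
    (h_sinh : sinhE = (2 * h)⁻¹ • (NormedSpace.exp (h • E) - NormedSpace.exp (-(h • E))))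
    (h_exp : expwAp = NormedSpace.exp (w • Ap))
    (h_expm : expmwAp = NormedSpace.exp (-(w • Ap)))
    -- defining relations of U_{h,w}(H(4))
    (rel1 : ⁅A, Ap⁆ = sinhE * expwAp)
    (rel2 : ⁅N, Ap⁆ = w⁻¹ • (expwAp - 1))
    (rel3 : ⁅N, A⁆ = -A)
    (relE : ∀ x : U, ⁅E, x⁆ = 0) :
    let C : U := N * sinhE + ((2 * w)⁻¹ • (expmwAp - 1)) * A + A * ((2 * w)⁻¹ • (expmwAp - 1))
    ⁅C, N⁆ = 0 ∧ ⁅C, E⁆ = 0 ∧ ⁅C, Ap⁆ = 0 ∧ ⁅C, A⁆ = 0 := by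
  intro C
  letI : LieRing U := LieRing.ofAssociativeRing
  letI : LieAlgebra ℂ U := LieAlgebra.ofAssociativeAlgebra
  letI : NormedAlgebra ℚ U := NormedAlgebra.restrictScalars ℚ ℂ U
  -- E commutes with everything, hence sinhE is central
  have hEc : ∀ x : U, Commute E x := by
    intro x
    have := relE x; rw [Ring.lie_def, sub_eq_zero] at this; exact this
  have hScomm : ∀ x : U, Commute sinhE x := by
    intro x
    rw [h_sinh]
    exact ((((hEc x).smul_left h).exp_left).sub_left
      ((((hEc x).smul_left h).neg_left).exp_left)).smul_left _
  have lS : ∀ x : U, ⁅sinhE, x⁆ = 0 := by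
    intro x; rw [Ring.lie_def, sub_eq_zero]; exact hScomm x
  -- exp(±wAp) commute with Ap and are mutually inverse
  have hApE : Commute Ap expwAp := by
    rw [h_exp]; exact ((Commute.refl Ap).smul_right w).exp_right
  have hApEm : Commute Ap expmwAp := by
    rw [h_expm]; exact (((Commute.refl Ap).smul_right w).neg_right).exp_right
  have hmul : expmwAp * expwAp = 1 := by
    rw [h_exp, h_expm, ← exp_add_of_commute ((Commute.refl (w • Ap)).neg_left),
      neg_add_cancel, exp_zero]
  have hmul' : expwAp * expmwAp = 1 := by
    rw [h_exp, h_expm, ← exp_add_of_commute ((Commute.refl (w • Ap)).neg_right),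
      add_neg_cancel, exp_zero]
  -- key commutator 1 : [N, exp(-wAp)] = exp(-wAp) - 1
  have key1 : N * expmwAp - expmwAp * N = expmwAp - 1 := by
    have hr : N * Ap - Ap * N = w⁻¹ • (expwAp - 1) := by rw [← Ring.lie_def, rel2]
    have hNY : N * (-(w • Ap)) - (-(w • Ap)) * N = 1 - expwAp := by
      calc N * (-(w • Ap)) - (-(w • Ap)) * N = -(w • (N*Ap - Ap*N)) := by
            rw [mul_neg, neg_mul, mul_smul_comm, smul_mul_assoc, smul_sub]; abel
        _ = 1 - expwAp := by
            rw [hr, smul_smul, mul_inv_cancel₀ hw, one_smul, neg_sub]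
    have hc : (-(w • Ap)) * (N * (-(w • Ap)) - (-(w • Ap)) * N)
        = (N * (-(w • Ap)) - (-(w • Ap)) * N) * (-(w • Ap)) := by
      rw [hNY]
      exact (((Commute.one_right Ap).sub_right hApE).smul_left w).neg_left.eq
    have := lie_exp_aux N (-(w • Ap)) hc
    rw [← h_expm] at this
    rw [this, hNY, mul_sub, mul_one, hmul]
  -- key commutator 2 : [A, exp(-wAp)] = -(w • sinhE)
  have key2 : A * expmwAp - expmwAp * A = -(w • sinhE) := by
    have hr : A * Ap - Ap * A = sinhE * expwAp := by rw [← Ring.lie_def, rel1]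
    have hAY : A * (-(w • Ap)) - (-(w • Ap)) * A = -(w • (sinhE * expwAp)) := by
      calc A * (-(w • Ap)) - (-(w • Ap)) * A = -(w • (A*Ap - Ap*A)) := by
            rw [mul_neg, neg_mul, mul_smul_comm, smul_mul_assoc, smul_sub]; abel
        _ = -(w • (sinhE * expwAp)) := by rw [hr]
    have hc : (-(w • Ap)) * (A * (-(w • Ap)) - (-(w • Ap)) * A)
        = (A * (-(w • Ap)) - (-(w • Ap)) * A) * (-(w • Ap)) := by
      rw [hAY]
      have h1 : Commute Ap (sinhE * expwAp) := ((hScomm Ap).symm).mul_right hApE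
      exact ((((h1.smul_left w).neg_left).smul_right w).neg_right).eq
    have := lie_exp_aux A (-(w • Ap)) hc
    rw [← h_expm] at this
    rw [this, hAY, mul_neg]
    congr 1
    rw [mul_smul_comm]
    congr 1
    rw [← mul_assoc, ← (hScomm expmwAp).eq, mul_assoc, hmul, mul_one]
  -- derived bracket values
  have lND : ⁅N, (2*w)⁻¹ • (expmwAp - 1)⁆ = (2*w)⁻¹ • (expmwAp - 1) := by
    rw [lie_smul]
    congr 1
    rw [Ring.lie_def, sub_mul, mul_sub, mul_one, one_mul]
    calc N * expmwAp - N - (expmwAp * N - N) = N * expmwAp - expmwAp * N := by abel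
      _ = expmwAp - 1 := key1
  have lDN : ⁅(2*w)⁻¹ • (expmwAp - 1), N⁆ = -((2*w)⁻¹ • (expmwAp - 1)) := by
    rw [← lie_skew, lND]
  have lDA : ⁅(2*w)⁻¹ • (expmwAp - 1), A⁆ = (2:ℂ)⁻¹ • sinhE := by
    rw [smul_lie]
    have : ⁅expmwAp - 1, A⁆ = w • sinhE := by
      rw [Ring.lie_def, sub_mul, mul_sub, mul_one, one_mul]
      calc expmwAp * A - A - (A * expmwAp - A) = -(A * expmwAp - expmwAp * A) := by abel
        _ = w • sinhE := by rw [key2, neg_neg]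
    rw [this, smul_smul, mul_inv, mul_assoc, inv_mul_cancel₀ hw, mul_one]
  have lDAp : ⁅(2*w)⁻¹ • (expmwAp - 1), Ap⁆ = 0 := by
    rw [Ring.lie_def, sub_eq_zero]
    exact (((hApEm.symm).sub_left (Commute.one_left Ap)).smul_left _).eq
  have lAN : ⁅A, N⁆ = A := by rw [← lie_skew, rel3, neg_neg]
  refine ⟨?_, ?_, ?_, ?_⟩
  · -- [C, N] = 0
    show ⁅N * sinhE + ((2*w)⁻¹ • (expmwAp - 1)) * A + A * ((2*w)⁻¹ • (expmwAp - 1)), N⁆ = 0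
    rw [add_lie, add_lie, mulLie, mulLie, mulLie, lS, lie_self, lDN, lAN]
    noncomm_ring
  · -- [C, E] = 0
    rw [← lie_skew, relE, neg_zero]
  · -- [C, Ap] = 0
    show ⁅N * sinhE + ((2*w)⁻¹ • (expmwAp - 1)) * A + A * ((2*w)⁻¹ • (expmwAp - 1)), Ap⁆ = 0
    rw [add_lie, add_lie, mulLie, mulLie, mulLie, lS, rel2, rel1, lDAp]
    have hA1 : ((2*w)⁻¹ • (expmwAp - 1)) * (sinhE * expwAp)
        = -((2*w)⁻¹ • (sinhE * (expwAp - 1))) := by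
      rw [smul_mul_assoc, ← smul_neg]
      congr 1
      rw [← mul_assoc, ← (hScomm (expmwAp - 1)).eq, mul_assoc, sub_mul, one_mul, hmul, ← mul_neg, neg_sub]
    have hA2 : (sinhE * expwAp) * ((2*w)⁻¹ • (expmwAp - 1))
        = -((2*w)⁻¹ • (sinhE * (expwAp - 1))) := by
      rw [mul_smul_comm, ← smul_neg]
      congr 1
      rw [mul_assoc, mul_sub, mul_one, hmul', ← mul_neg, neg_sub]
    have hA3 : (w⁻¹ • (expwAp - 1)) * sinhE = w⁻¹ • (sinhE * (expwAp - 1)) := by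
      rw [smul_mul_assoc, (hScomm (expwAp - 1)).eq]
    rw [hA1, hA2, hA3]
    simp only [mul_zero, zero_mul, add_zero, zero_add]
    rw [mul_inv]
    module
  · -- [C, A] = 0
    show ⁅N * sinhE + ((2*w)⁻¹ • (expmwAp - 1)) * A + A * ((2*w)⁻¹ • (expmwAp - 1)), A⁆ = 0
    rw [add_lie, add_lie, mulLie, mulLie, mulLie, lS, rel3, lie_self, lDA]
    have h1 : ((2:ℂ)⁻¹ • sinhE) * A = (2:ℂ)⁻¹ • (A * sinhE) := by
      rw [smul_mul_assoc, (hScomm A).eq]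
    have h2 : A * ((2:ℂ)⁻¹ • sinhE) = (2:ℂ)⁻¹ • (A * sinhE) := by
      rw [mul_smul_comm]
    rw [h1, h2]
    simp only [mul_zero, zero_mul, add_zero, zero_add, neg_mul]
    module
end

section
/- In U_h(H(4)) with relations [A,A⁺] = sinh(hE)/h, [N,A⁺]=A⁺, [N,A]=−A and E central, the element C_h = N·sinh(hE)/h − (1/2)(A⁺A + AA⁺) is central. -/
/-!
STATEMENT 5: In `U_h(H(4))` with relations `[A,A⁺] = sinh(hE)/h`, `[N,A⁺] = A⁺`,
`[N,A] = −A` and `E` central, the element `C_h = N·sinh(hE)/h − (1/2)(A⁺A + AA⁺)`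
is central (commutes with each generator).

We formalize `sinh(hE)/h` as the convergent power series
`∑' k, (h^(2k) / (2k+1)!) • E^(2k+1)` in a complete normed ℂ-algebra. -/

theorem stmt5 (U : Type*) [NormedRing U] [NormedAlgebra ℂ U] [CompleteSpace U]
    (h : ℂ)
    (N E Ap A : U)
    (sinhE : U)
    (h_sinh : sinhE = ∑' k : ℕ, ((h ^ (2 * k) / (Nat.factorial (2 * k + 1)) : ℂ)) • E ^ (2 * k + 1))
    (rel1 : ⁅A, Ap⁆ = sinhE)
    (rel2 : ⁅N, Ap⁆ = Ap)
    (rel3 : ⁅N, A⁆ = -A)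
    (relE : ∀ x : U, ⁅E, x⁆ = 0) :
    let C : U := N * sinhE - (2 : ℂ)⁻¹ • (Ap * A + A * Ap)
    ⁅C, N⁆ = 0 ∧ ⁅C, E⁆ = 0 ∧ ⁅C, Ap⁆ = 0 ∧ ⁅C, A⁆ = 0 := by
  intro C
  -- E commutes with everything
  have hE : ∀ x : U, Commute E x := by
    intro x
    have := relE x
    rw [Ring.lie_def, sub_eq_zero] at this
    exact this
  -- sinhE commutes with everything
  have hS : ∀ x : U, sinhE * x = x * sinhE := by
    intro x
    have hc : Commute x sinhE := by
      rw [h_sinh]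
      refine Commute.tsum_right _ fun k => ?_
      exact (((hE x).symm.pow_right _).smul_right _)
    exact hc.symm.eq
  have hApA : A * Ap = Ap * A + sinhE := by
    rw [← rel1, Ring.lie_def]; abel
  have hNAp : N * Ap = Ap * N + Ap := by
    have := rel2; rw [Ring.lie_def, sub_eq_iff_eq_add] at this; rw [this]; abel
  have hNA : N * A = A * N - A := by
    have := rel3; rw [Ring.lie_def, sub_eq_iff_eq_add] at this; rw [this]; abel
  -- right-associated versions for simp normalization
  have hS' : ∀ x y : U, sinhE * x = x * sinhE := fun x _ => hS x
  have hSx : ∀ x y : U, sinhE * (x * y) = x * (sinhE * y) := by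
    intro x y; rw [← mul_assoc, hS, mul_assoc]
  have hApA' : ∀ x : U, A * (Ap * x) = Ap * (A * x) + sinhE * x := by
    intro x; rw [← mul_assoc, hApA, add_mul, mul_assoc]
  have hNAp' : ∀ x : U, N * (Ap * x) = Ap * (N * x) + Ap * x := by
    intro x; rw [← mul_assoc, hNAp, add_mul, mul_assoc]
  have hNA' : ∀ x : U, N * (A * x) = A * (N * x) - A * x := by
    intro x; rw [← mul_assoc, hNA, sub_mul, mul_assoc]
  refine ⟨?_, ?_, ?_, ?_⟩
  · show ⁅C, N⁆ = 0
    simp only [C, Ring.lie_def, mul_sub, sub_mul, mul_add, add_mul, smul_mul_assoc,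
      mul_smul_comm, smul_add, smul_sub, mul_assoc, hApA', hNAp', hNA', hSx, hS, hApA, hNAp, hNA]
    module
  · show ⁅C, E⁆ = 0
    rw [Ring.lie_def, (hE C).eq, sub_self]
  · show ⁅C, Ap⁆ = 0
    simp only [C, Ring.lie_def, mul_sub, sub_mul, mul_add, add_mul, smul_mul_assoc,
      mul_smul_comm, smul_add, smul_sub, mul_assoc, hApA', hNAp', hNA', hSx, hS, hApA, hNAp, hNA]
    module
  · show ⁅C, A⁆ = 0
    simp only [C, Ring.lie_def, mul_sub, sub_mul, mul_add, add_mul, smul_mul_assoc,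
      mul_smul_comm, smul_add, smul_sub, mul_assoc, hApA', hNAp', hNA', hSx, hS, hApA, hNAp, hNA]
    module
end

section
/- Let U be a Hopf algebra with invertible antipode S and F ∈ U⊗U an invertible twist satisfying (Δ⊗id)(F)F₁₂ = (id⊗Δ)(F)F₂₃ and the counit conditions (ε⊗id)(F)=(id⊗ε)(F)=1. With v = m(S⊗id)(F), one has Δ(v) = (S⊗S)(F₂₁⁻¹)·(v⊗v)·F⁻¹. -/
/-!
STATEMENT 10: Let `U` be a Hopf algebra with invertible antipode `S` and `F ∈ U⊗U` an
invertible twist satisfying `(Δ⊗id)(F)F₁₂ = (id⊗Δ)(F)F₂₃` and the counit conditions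
`(ε⊗id)(F) = (id⊗ε)(F) = 1`.  With `v = m(S⊗id)(F)`, one has
`Δ(v) = (S⊗S)(F₂₁⁻¹)·(v⊗v)·F⁻¹`, where `F₂₁ = σ(F)` for the tensor flip `σ`. -/

open TensorProduct

namespace Stmt10Aux

variable {R H : Type*} [CommRing R] [Ring H] [Algebra R H]

/-- `T = (S ⊗ S) ∘ flip`, an algebra map when `S` is anti-multiplicative. -/
noncomputable def Tm (S : H →ₗ[R] H) : H ⊗[R] H →ₗ[R] H ⊗[R] H :=
  (TensorProduct.map S S) ∘ₗ (Algebra.TensorProduct.comm R H H).toLinearMap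

@[simp] lemma Tm_tmul (S : H →ₗ[R] H) (a b : H) : Tm S (a ⊗ₜ[R] b) = S b ⊗ₜ S a := by
  simp [Tm]

/-- `w = m ∘ (S ⊗ id)`. -/
noncomputable def wm (S : H →ₗ[R] H) : H ⊗[R] H →ₗ[R] H :=
  LinearMap.mul' R H ∘ₗ S.rTensor H

@[simp] lemma wm_tmul (S : H →ₗ[R] H) (a b : H) : wm S (a ⊗ₜ[R] b) = S a * b := by
  simp [wm]

lemma Tm_antimul (S : H →ₗ[R] H) (hS : ∀ x y : H, S (x * y) = S y * S x)
    (x y : H ⊗[R] H) : Tm S (x * y) = Tm S y * Tm S x := by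
  induction x using TensorProduct.induction_on with
  | zero => simp
  | add x₁ x₂ h1 h2 => simp [add_mul, mul_add, h1, h2]
  | tmul a b =>
    induction y using TensorProduct.induction_on with
    | zero => simp
    | add y₁ y₂ h1 h2 => simp [mul_add, add_mul, h1, h2]
    | tmul c d => simp [Algebra.TensorProduct.tmul_mul_tmul, hS]

lemma Tm_one (S : H →ₗ[R] H) (hS1 : S 1 = 1) : Tm S (1 : H ⊗[R] H) = 1 := by
  show Tm S ((1 : H) ⊗ₜ[R] (1 : H)) = (1 : H) ⊗ₜ[R] (1 : H)
  simp [hS1]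


section Conv

variable (comul : H →ₐ[R] H ⊗[R] H) (counit : H →ₐ[R] R)

/-- convolution product on `Hom(H, H ⊗ H)`. -/
noncomputable def conv (f g : H →ₗ[R] H ⊗[R] H) : H →ₗ[R] H ⊗[R] H :=
  LinearMap.mul' R (H ⊗[R] H) ∘ₗ TensorProduct.map f g ∘ₗ comul.toLinearMap

lemma conv_apply (f g : H →ₗ[R] H ⊗[R] H) (x : H) :
    conv comul f g x = LinearMap.mul' R (H ⊗[R] H) (TensorProduct.map f g (comul x)) := rfl

/-- the convolution unit `η ∘ ε`. -/
noncomputable def eps2 : H →ₗ[R] H ⊗[R] H :=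
  (Algebra.linearMap R (H ⊗[R] H)) ∘ₗ counit.toLinearMap

lemma eps2_apply (x : H) : eps2 counit x = algebraMap R (H ⊗[R] H) (counit x) := rfl

lemma conv_eps_left
    (counit_left : ∀ x : H,
      (TensorProduct.lid R H) ((Algebra.TensorProduct.map counit (AlgHom.id R H)) (comul x)) = x)
    (f : H →ₗ[R] H ⊗[R] H) : conv comul (eps2 counit) f = f := by
  ext x
  have key : ∀ z : H ⊗[R] H,
      LinearMap.mul' R (H ⊗[R] H) (TensorProduct.map (eps2 counit) f z) =
      f ((TensorProduct.lid R H) ((Algebra.TensorProduct.map counit (AlgHom.id R H)) z)) := by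
    intro z
    induction z using TensorProduct.induction_on with
    | zero => simp
    | add z₁ z₂ h1 h2 => simp [h1, h2, TensorProduct.tmul_add, TensorProduct.add_tmul]
    | tmul a b =>
      simp only [TensorProduct.map_tmul, LinearMap.mul'_apply, eps2_apply,
        Algebra.TensorProduct.map_tmul, AlgHom.coe_id, id_eq, TensorProduct.lid_tmul, map_smul]
      rw [← Algebra.smul_def]
  show LinearMap.mul' R _ (TensorProduct.map (eps2 counit) f (comul x)) = f x
  rw [key, counit_left]

lemma conv_eps_right
    (counit_right : ∀ x : H,
      (TensorProduct.rid R H) ((Algebra.TensorProduct.map (AlgHom.id R H) counit) (comul x)) = x)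
    (f : H →ₗ[R] H ⊗[R] H) : conv comul f (eps2 counit) = f := by
  ext x
  have key : ∀ z : H ⊗[R] H,
      LinearMap.mul' R (H ⊗[R] H) (TensorProduct.map f (eps2 counit) z) =
      f ((TensorProduct.rid R H) ((Algebra.TensorProduct.map (AlgHom.id R H) counit) z)) := by
    intro z
    induction z using TensorProduct.induction_on with
    | zero => simp
    | add z₁ z₂ h1 h2 => simp [h1, h2, TensorProduct.tmul_add, TensorProduct.add_tmul]
    | tmul a b =>
      simp only [TensorProduct.map_tmul, LinearMap.mul'_apply, eps2_apply,
        Algebra.TensorProduct.map_tmul, AlgHom.coe_id, id_eq, TensorProduct.rid_tmul,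
        map_smul]
      rw [← Algebra.commutes, ← Algebra.smul_def]
  show LinearMap.mul' R _ (TensorProduct.map f (eps2 counit) (comul x)) = f x
  rw [key, counit_right]

lemma conv_assoc
    (coassoc : ∀ x : H,
      (Algebra.TensorProduct.assoc R R R H H H)
          ((Algebra.TensorProduct.map comul (AlgHom.id R H)) (comul x)) =
        (Algebra.TensorProduct.map (AlgHom.id R H) comul) (comul x))
    (f g h : H →ₗ[R] H ⊗[R] H) :
    conv comul (conv comul f g) h = conv comul f (conv comul g h) := by
  ext x
  have step1 : ∀ z : H ⊗[R] H,
      LinearMap.mul' R (H ⊗[R] H) (TensorProduct.map (conv comul f g) h z) =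
      LinearMap.mul' R (H ⊗[R] H)
        (TensorProduct.map (LinearMap.mul' R (H ⊗[R] H) ∘ₗ TensorProduct.map f g) h
          ((Algebra.TensorProduct.map comul (AlgHom.id R H)) z)) := by
    intro z
    induction z using TensorProduct.induction_on with
    | zero => simp
    | add z₁ z₂ h1 h2 => simp [h1, h2, TensorProduct.tmul_add, TensorProduct.add_tmul]
    | tmul a b => simp [conv]
  have step3 : ∀ z : H ⊗[R] H,
      LinearMap.mul' R (H ⊗[R] H) (TensorProduct.map f (conv comul g h) z) =
      LinearMap.mul' R (H ⊗[R] H)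
        (TensorProduct.map f (LinearMap.mul' R (H ⊗[R] H) ∘ₗ TensorProduct.map g h)
          ((Algebra.TensorProduct.map (AlgHom.id R H) comul) z)) := by
    intro z
    induction z using TensorProduct.induction_on with
    | zero => simp
    | add z₁ z₂ h1 h2 => simp [h1, h2, TensorProduct.tmul_add, TensorProduct.add_tmul]
    | tmul a b => simp [conv]
  have step2 : ∀ z : (H ⊗[R] H) ⊗[R] H,
      LinearMap.mul' R (H ⊗[R] H)
        (TensorProduct.map (LinearMap.mul' R (H ⊗[R] H) ∘ₗ TensorProduct.map f g) h z) =
      LinearMap.mul' R (H ⊗[R] H)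
        (TensorProduct.map f (LinearMap.mul' R (H ⊗[R] H) ∘ₗ TensorProduct.map g h)
          ((Algebra.TensorProduct.assoc R R R H H H) z)) := by
    intro z
    induction z using TensorProduct.induction_on with
    | zero => simp
    | add z₁ z₂ h1 h2 => simp [h1, h2, TensorProduct.tmul_add, TensorProduct.add_tmul]
    | tmul zz c =>
      induction zz using TensorProduct.induction_on with
      | zero => simp only [TensorProduct.zero_tmul, map_zero]
      | add z₁ z₂ h1 h2 => simp only [TensorProduct.add_tmul, map_add, h1, h2]
      | tmul a b => simp [Algebra.TensorProduct.assoc_tmul, mul_assoc]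
  show LinearMap.mul' R _ (TensorProduct.map (conv comul f g) h (comul x)) =
    LinearMap.mul' R _ (TensorProduct.map f (conv comul g h) (comul x))
  rw [step1, step3, step2, coassoc]

/-- `a ↦ a ⊗ 1`. -/
noncomputable def i1 : H →ₗ[R] H ⊗[R] H :=
  (Algebra.TensorProduct.includeLeft : H →ₐ[R] H ⊗[R] H).toLinearMap

/-- `a ↦ 1 ⊗ a`. -/
noncomputable def i2 : H →ₗ[R] H ⊗[R] H :=
  (Algebra.TensorProduct.includeRight : H →ₐ[R] H ⊗[R] H).toLinearMap

@[simp] lemma i1_apply (a : H) : (i1 : H →ₗ[R] H ⊗[R] H) a = a ⊗ₜ 1 := rfl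
@[simp] lemma i2_apply (a : H) : (i2 : H →ₗ[R] H ⊗[R] H) a = 1 ⊗ₜ a := rfl

lemma conv_i1_i2 : conv comul i1 i2 = comul.toLinearMap := by
  ext x
  have key : ∀ z : H ⊗[R] H,
      LinearMap.mul' R (H ⊗[R] H) (TensorProduct.map i1 i2 z) = z := by
    intro z
    induction z using TensorProduct.induction_on with
    | zero => simp
    | add z₁ z₂ h1 h2 => simp [h1, h2, TensorProduct.tmul_add, TensorProduct.add_tmul]
    | tmul a b => simp [Algebra.TensorProduct.tmul_mul_tmul]
  show LinearMap.mul' R _ (TensorProduct.map i1 i2 (comul x)) = comul x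
  rw [key]

lemma conv_T (S : H →ₗ[R] H) :
    conv comul (i2 ∘ₗ S) (i1 ∘ₗ S) = Tm S ∘ₗ comul.toLinearMap := by
  ext x
  have key : ∀ z : H ⊗[R] H,
      LinearMap.mul' R (H ⊗[R] H) (TensorProduct.map (i2 ∘ₗ S) (i1 ∘ₗ S) z) = Tm S z := by
    intro z
    induction z using TensorProduct.induction_on with
    | zero => simp
    | add z₁ z₂ h1 h2 => simp [h1, h2, TensorProduct.tmul_add, TensorProduct.add_tmul]
    | tmul a b => simp [Algebra.TensorProduct.tmul_mul_tmul]
  show LinearMap.mul' R _ (TensorProduct.map (i2 ∘ₗ S) (i1 ∘ₗ S) (comul x)) = Tm S (comul x)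
  rw [key]

lemma conv_i2_i2S (S : H →ₗ[R] H)
    (antipode_right : ∀ x : H,
      LinearMap.mul' R H ((S.lTensor H) (comul x)) = algebraMap R H (counit x)) :
    conv comul i2 (i2 ∘ₗ S) = eps2 counit := by
  ext x
  have key : ∀ z : H ⊗[R] H,
      LinearMap.mul' R (H ⊗[R] H) (TensorProduct.map i2 (i2 ∘ₗ S) z) =
        i2 (LinearMap.mul' R H (S.lTensor H z)) := by
    intro z
    induction z using TensorProduct.induction_on with
    | zero => simp
    | add z₁ z₂ h1 h2 => simp [h1, h2, TensorProduct.tmul_add, TensorProduct.add_tmul]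
    | tmul a b => simp [Algebra.TensorProduct.tmul_mul_tmul]
  show LinearMap.mul' R _ (TensorProduct.map i2 (i2 ∘ₗ S) (comul x)) = eps2 counit x
  rw [key, antipode_right]
  exact (Algebra.TensorProduct.includeRight : H →ₐ[R] H ⊗[R] H).commutes (counit x)

lemma conv_i1_i1S (S : H →ₗ[R] H)
    (antipode_right : ∀ x : H,
      LinearMap.mul' R H ((S.lTensor H) (comul x)) = algebraMap R H (counit x)) :
    conv comul i1 (i1 ∘ₗ S) = eps2 counit := by
  ext x
  have key : ∀ z : H ⊗[R] H,
      LinearMap.mul' R (H ⊗[R] H) (TensorProduct.map i1 (i1 ∘ₗ S) z) =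
        i1 (LinearMap.mul' R H (S.lTensor H z)) := by
    intro z
    induction z using TensorProduct.induction_on with
    | zero => simp
    | add z₁ z₂ h1 h2 => simp [h1, h2, TensorProduct.tmul_add, TensorProduct.add_tmul]
    | tmul a b => simp [Algebra.TensorProduct.tmul_mul_tmul]
  show LinearMap.mul' R _ (TensorProduct.map i1 (i1 ∘ₗ S) (comul x)) = eps2 counit x
  rw [key, antipode_right]
  exact (Algebra.TensorProduct.includeLeft : H →ₐ[R] H ⊗[R] H).commutes (counit x)

lemma conv_SD_D (S : H →ₗ[R] H)
    (antipode_left : ∀ x : H,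
      LinearMap.mul' R H ((S.rTensor H) (comul x)) = algebraMap R H (counit x)) :
    conv comul (comul.toLinearMap ∘ₗ S) comul.toLinearMap = eps2 counit := by
  ext x
  have key : ∀ z : H ⊗[R] H,
      LinearMap.mul' R (H ⊗[R] H)
        (TensorProduct.map (comul.toLinearMap ∘ₗ S) comul.toLinearMap z) =
        comul (LinearMap.mul' R H (S.rTensor H z)) := by
    intro z
    induction z using TensorProduct.induction_on with
    | zero => simp
    | add z₁ z₂ h1 h2 => simp [h1, h2, TensorProduct.tmul_add, TensorProduct.add_tmul]
    | tmul a b => simp [← map_mul]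
  show LinearMap.mul' R _
      (TensorProduct.map (comul.toLinearMap ∘ₗ S) comul.toLinearMap (comul x)) = eps2 counit x
  rw [key, antipode_left]
  exact comul.commutes (counit x)

/-- The antipode is anti-comultiplicative: `Δ ∘ S = (S ⊗ S) ∘ σ ∘ Δ`. -/
lemma antipode_anticomul (S : H →ₗ[R] H)
    (coassoc : ∀ x : H,
      (Algebra.TensorProduct.assoc R R R H H H)
          ((Algebra.TensorProduct.map comul (AlgHom.id R H)) (comul x)) =
        (Algebra.TensorProduct.map (AlgHom.id R H) comul) (comul x))
    (counit_left : ∀ x : H,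
      (TensorProduct.lid R H) ((Algebra.TensorProduct.map counit (AlgHom.id R H)) (comul x)) = x)
    (counit_right : ∀ x : H,
      (TensorProduct.rid R H) ((Algebra.TensorProduct.map (AlgHom.id R H) counit) (comul x)) = x)
    (antipode_left : ∀ x : H,
      LinearMap.mul' R H ((S.rTensor H) (comul x)) = algebraMap R H (counit x))
    (antipode_right : ∀ x : H,
      LinearMap.mul' R H ((S.lTensor H) (comul x)) = algebraMap R H (counit x))
    (x : H) : comul (S x) = Tm S (comul x) := by
  have hTD : conv comul comul.toLinearMap (Tm S ∘ₗ comul.toLinearMap) = eps2 counit := by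
    calc conv comul comul.toLinearMap (Tm S ∘ₗ comul.toLinearMap)
        = conv comul (conv comul i1 i2) (conv comul (i2 ∘ₗ S) (i1 ∘ₗ S)) := by
          rw [conv_i1_i2, conv_T]
      _ = conv comul i1 (conv comul i2 (conv comul (i2 ∘ₗ S) (i1 ∘ₗ S))) :=
          conv_assoc comul coassoc _ _ _
      _ = conv comul i1 (conv comul (conv comul i2 (i2 ∘ₗ S)) (i1 ∘ₗ S)) := by
          rw [conv_assoc comul coassoc]
      _ = conv comul i1 (conv comul (eps2 counit) (i1 ∘ₗ S)) := by
          rw [conv_i2_i2S comul counit S antipode_right]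
      _ = conv comul i1 (i1 ∘ₗ S) := by
          rw [conv_eps_left comul counit counit_left]
      _ = eps2 counit := conv_i1_i1S comul counit S antipode_right
  have main : comul.toLinearMap ∘ₗ S = Tm S ∘ₗ comul.toLinearMap := by
    calc comul.toLinearMap ∘ₗ S
        = conv comul (comul.toLinearMap ∘ₗ S) (eps2 counit) :=
          (conv_eps_right comul counit counit_right _).symm
      _ = conv comul (comul.toLinearMap ∘ₗ S)
            (conv comul comul.toLinearMap (Tm S ∘ₗ comul.toLinearMap)) := by rw [hTD]
      _ = conv comul (conv comul (comul.toLinearMap ∘ₗ S) comul.toLinearMap)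
            (Tm S ∘ₗ comul.toLinearMap) := (conv_assoc comul coassoc _ _ _).symm
      _ = conv comul (eps2 counit) (Tm S ∘ₗ comul.toLinearMap) := by
          rw [conv_SD_D comul counit S antipode_left]
      _ = Tm S ∘ₗ comul.toLinearMap := conv_eps_left comul counit counit_left _
  exact LinearMap.congr_fun main x

end Conv

section Main

variable (comul : H →ₐ[R] H ⊗[R] H) (counit : H →ₐ[R] R) (S : H →ₗ[R] H)

/-- `Ψ(a ⊗ z) = Δ(S a) * z`. -/
noncomputable def Psi : H ⊗[R] (H ⊗[R] H) →ₗ[R] H ⊗[R] H :=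
  LinearMap.mul' R (H ⊗[R] H) ∘ₗ
    TensorProduct.map (comul.toLinearMap ∘ₗ S) (LinearMap.id : H ⊗[R] H →ₗ[R] H ⊗[R] H)

@[simp] lemma Psi_tmul (a : H) (z : H ⊗[R] H) :
    Psi comul S (a ⊗ₜ z) = comul (S a) * z := by
  simp [Psi]

/-- `κ(a ⊗ b) = Δ(S a) * (b ⊗ 1)`. -/
noncomputable def kap : H ⊗[R] H →ₗ[R] H ⊗[R] H :=
  LinearMap.mul' R (H ⊗[R] H) ∘ₗ TensorProduct.map (comul.toLinearMap ∘ₗ S) i1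

@[simp] lemma kap_tmul (a b : H) :
    kap comul S (a ⊗ₜ b) = comul (S a) * (b ⊗ₜ 1) := by
  simp [kap]

/-- `Q(a ⊗ z) = w(z) ⊗ S a`. -/
noncomputable def Qm : H ⊗[R] (H ⊗[R] H) →ₗ[R] H ⊗[R] H :=
  (TensorProduct.comm R H H).toLinearMap ∘ₗ TensorProduct.map S (wm S)

@[simp] lemma Qm_tmul (a : H) (z : H ⊗[R] H) :
    Qm S (a ⊗ₜ z) = wm S z ⊗ₜ S a := by
  simp [Qm]

variable (hS_antimul : ∀ x y : H, S (x * y) = S y * S x)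

lemma wm_mul_tmul (hS_antimul : ∀ x y : H, S (x * y) = S y * S x)
    (z' : H ⊗[R] H) (y z : H) :
    wm S (z' * (y ⊗ₜ z)) = S y * wm S z' * z := by
  induction z' using TensorProduct.induction_on with
  | zero => simp
  | add z₁ z₂ h1 h2 => simp [add_mul, mul_add, h1, h2]
  | tmul u w' => simp [Algebra.TensorProduct.tmul_mul_tmul, hS_antimul, mul_assoc]

lemma wm_comul_mul (hS_antimul : ∀ x y : H, S (x * y) = S y * S x)
    (antipode_left : ∀ x : H,
      LinearMap.mul' R H ((S.rTensor H) (comul x)) = algebraMap R H (counit x))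
    (g : H) (Y : H ⊗[R] H) :
    wm S (comul g * Y) = counit g • wm S Y := by
  induction Y using TensorProduct.induction_on with
  | zero => simp
  | add Y₁ Y₂ h1 h2 => simp [mul_add, h1, h2]
  | tmul y z =>
    have hw : wm S (comul g) = algebraMap R H (counit g) := antipode_left g
    rw [wm_mul_tmul S hS_antimul, hw, ← Algebra.commutes, ← Algebra.smul_def,
      smul_mul_assoc]
    simp

lemma kap_comul
    (coassoc : ∀ x : H,
      (Algebra.TensorProduct.assoc R R R H H H)
          ((Algebra.TensorProduct.map comul (AlgHom.id R H)) (comul x)) =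
        (Algebra.TensorProduct.map (AlgHom.id R H) comul) (comul x))
    (counit_left : ∀ x : H,
      (TensorProduct.lid R H) ((Algebra.TensorProduct.map counit (AlgHom.id R H)) (comul x)) = x)
    (counit_right : ∀ x : H,
      (TensorProduct.rid R H) ((Algebra.TensorProduct.map (AlgHom.id R H) counit) (comul x)) = x)
    (antipode_left : ∀ x : H,
      LinearMap.mul' R H ((S.rTensor H) (comul x)) = algebraMap R H (counit x))
    (antipode_right : ∀ x : H,
      LinearMap.mul' R H ((S.lTensor H) (comul x)) = algebraMap R H (counit x))
    (f : H) : kap comul S (comul f) = (1 : H) ⊗ₜ S f := by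
  have s1 : ∀ z : H ⊗[R] H, kap comul S z =
      LinearMap.mul' R (H ⊗[R] H)
        (TensorProduct.map (Tm S) i1 ((Algebra.TensorProduct.map comul (AlgHom.id R H)) z)) := by
    intro z
    induction z using TensorProduct.induction_on with
    | zero => simp
    | add z₁ z₂ h1 h2 => simp [h1, h2]
    | tmul a b =>
      simp only [kap_tmul, Algebra.TensorProduct.map_tmul, AlgHom.coe_id, id_eq,
        TensorProduct.map_tmul, LinearMap.mul'_apply, i1_apply]
      rw [antipode_anticomul comul counit S coassoc counit_left counit_right
        antipode_left antipode_right]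
  have s2 : ∀ z : (H ⊗[R] H) ⊗[R] H,
      LinearMap.mul' R (H ⊗[R] H) (TensorProduct.map (Tm S) i1 z) =
      Qm S ((Algebra.TensorProduct.assoc R R R H H H) z) := by
    intro z
    induction z using TensorProduct.induction_on with
    | zero => simp
    | add z₁ z₂ h1 h2 => simp [h1, h2]
    | tmul zz c =>
      induction zz using TensorProduct.induction_on with
      | zero => simp only [TensorProduct.zero_tmul, map_zero]
      | add z₁ z₂ h1 h2 => simp only [TensorProduct.add_tmul, map_add, h1, h2]
      | tmul a b =>
        simp [Algebra.TensorProduct.assoc_tmul, Algebra.TensorProduct.tmul_mul_tmul]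
  have s3 : ∀ z : H ⊗[R] H,
      Qm S ((Algebra.TensorProduct.map (AlgHom.id R H) comul) z) =
      (1 : H) ⊗ₜ S ((TensorProduct.rid R H)
        ((Algebra.TensorProduct.map (AlgHom.id R H) counit) z)) := by
    intro z
    induction z using TensorProduct.induction_on with
    | zero => simp
    | add z₁ z₂ h1 h2 => simp [h1, h2, TensorProduct.tmul_add]
    | tmul f g =>
      have hw : wm S (comul g) = algebraMap R H (counit g) := antipode_left g
      simp only [Algebra.TensorProduct.map_tmul, AlgHom.coe_id, id_eq, Qm_tmul, hw,
        TensorProduct.rid_tmul, map_smul]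
      rw [Algebra.algebraMap_eq_smul_one, TensorProduct.smul_tmul]
  rw [s1, s2, coassoc, s3, counit_right]

end Main

end Stmt10Aux

open Stmt10Aux in
theorem stmt10 (R H : Type*) [CommRing R] [Ring H] [Algebra R H]
    (comul : H →ₐ[R] H ⊗[R] H)
    (counit : H →ₐ[R] R)
    (S : H →ₗ[R] H)
    (hS_antimul : ∀ x y : H, S (x * y) = S y * S x)
    (hS_one : S 1 = 1)
    (coassoc : ∀ x : H,
      (Algebra.TensorProduct.assoc R R R H H H)
          ((Algebra.TensorProduct.map comul (AlgHom.id R H)) (comul x)) =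
        (Algebra.TensorProduct.map (AlgHom.id R H) comul) (comul x))
    (counit_left : ∀ x : H,
      (TensorProduct.lid R H) ((Algebra.TensorProduct.map counit (AlgHom.id R H)) (comul x)) = x)
    (counit_right : ∀ x : H,
      (TensorProduct.rid R H) ((Algebra.TensorProduct.map (AlgHom.id R H) counit) (comul x)) = x)
    (antipode_left : ∀ x : H,
      LinearMap.mul' R H ((S.rTensor H) (comul x)) = algebraMap R H (counit x))
    (antipode_right : ∀ x : H,
      LinearMap.mul' R H ((S.lTensor H) (comul x)) = algebraMap R H (counit x))
    -- the antipode is invertible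
    (Sinv : H →ₗ[R] H)
    (hSinv : ∀ x : H, Sinv (S x) = x ∧ S (Sinv x) = x)
    -- the twist F and its inverse
    (F Finv : H ⊗[R] H)
    (hF_inv : F * Finv = 1 ∧ Finv * F = 1)
    (hF_cocycle :
      (Algebra.TensorProduct.assoc R R R H H H)
          ((Algebra.TensorProduct.map comul (AlgHom.id R H)) F) *
        (Algebra.TensorProduct.map (AlgHom.id R H)
          (Algebra.TensorProduct.includeLeft : H →ₐ[R] H ⊗[R] H)) F =
      (Algebra.TensorProduct.map (AlgHom.id R H) comul) F *
        (Algebra.TensorProduct.includeRight : H ⊗[R] H →ₐ[R] H ⊗[R] (H ⊗[R] H)) F)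
    (hF_counit_left :
      (TensorProduct.lid R H) ((Algebra.TensorProduct.map counit (AlgHom.id R H)) F) = 1)
    (hF_counit_right :
      (TensorProduct.rid R H) ((Algebra.TensorProduct.map (AlgHom.id R H) counit) F) = 1) :
    let v : H := LinearMap.mul' R H ((S.rTensor H) F)
    comul v =
      (TensorProduct.map S S) ((Algebra.TensorProduct.comm R H H) Finv) *
        (v ⊗ₜ v) * Finv := by
  intro v
  have hv : wm S F = v := rfl
  have hanti : ∀ x : H, comul (S x) = Tm S (comul x) := fun x =>
    antipode_anticomul comul counit S coassoc counit_left counit_right antipode_left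
      antipode_right x
  have hkap : ∀ f : H, kap comul S (comul f) = (1 : H) ⊗ₜ S f := fun f =>
    kap_comul comul counit S coassoc counit_left counit_right antipode_left antipode_right f
  have A1 : ∀ (X : H ⊗[R] (H ⊗[R] H)) (Y : H ⊗[R] H),
      Psi comul S (X * ((1 : H) ⊗ₜ Y)) = Psi comul S X * Y := by
    intro X Y
    induction X using TensorProduct.induction_on with
    | zero => simp
    | add X₁ X₂ h1 h2 => simp [add_mul, h1, h2]
    | tmul a z => simp [Algebra.TensorProduct.tmul_mul_tmul, mul_assoc]
  have A2 : ∀ X : H ⊗[R] H,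
      Psi comul S ((Algebra.TensorProduct.map (AlgHom.id R H) comul) X) = comul (wm S X) := by
    intro X
    induction X using TensorProduct.induction_on with
    | zero => simp
    | add X₁ X₂ h1 h2 => simp [h1, h2]
    | tmul f g => simp [← map_mul]
  have B1 : ∀ (z : H ⊗[R] H) (g f' g' : H),
      Psi comul S ((Algebra.TensorProduct.assoc R R R H H H) (z ⊗ₜ g) *
          (f' ⊗ₜ (g' ⊗ₜ (1 : H)))) =
        comul (S f') * kap comul S z * (g' ⊗ₜ g) := by
    intro z g f' g'
    induction z using TensorProduct.induction_on with
    | zero => simp [TensorProduct.zero_tmul]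
    | add z₁ z₂ h1 h2 => simp [TensorProduct.add_tmul, add_mul, mul_add, h1, h2]
    | tmul u w' =>
      simp [Algebra.TensorProduct.assoc_tmul, Algebra.TensorProduct.tmul_mul_tmul,
        hS_antimul, map_mul, mul_assoc]
  have B2 : ∀ X Y : H ⊗[R] H,
      Psi comul S ((Algebra.TensorProduct.assoc R R R H H H)
            ((Algebra.TensorProduct.map comul (AlgHom.id R H)) X) *
          (Algebra.TensorProduct.map (AlgHom.id R H)
            (Algebra.TensorProduct.includeLeft : H →ₐ[R] H ⊗[R] H)) Y) =
        kap comul S Y * ((1 : H) ⊗ₜ wm S X) := by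
    intro X Y
    induction X using TensorProduct.induction_on with
    | zero => simp [TensorProduct.tmul_zero]
    | add X₁ X₂ h1 h2 => simp [add_mul, mul_add, TensorProduct.tmul_add, h1, h2]
    | tmul f g =>
      induction Y using TensorProduct.induction_on with
      | zero => simp
      | add Y₁ Y₂ h1 h2 => simp only [map_add, mul_add, add_mul, h1, h2]
      | tmul f' g' =>
        simp only [Algebra.TensorProduct.map_tmul, AlgHom.coe_id, id_eq,
          Algebra.TensorProduct.includeLeft_apply]
        rw [B1 (comul f) g f' g', hkap f]
        simp [Algebra.TensorProduct.tmul_mul_tmul, mul_assoc]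
  have P0 : ∀ (z : H ⊗[R] H) (g f' g' : H),
      Qm S ((Algebra.TensorProduct.assoc R R R H H H) (z ⊗ₜ g) * (f' ⊗ₜ (g' ⊗ₜ (1 : H)))) =
        (S g' ⊗ₜ S f') * Tm S z * (g ⊗ₜ (1 : H)) := by
    intro z g f' g'
    induction z using TensorProduct.induction_on with
    | zero => simp [TensorProduct.zero_tmul]
    | add z₁ z₂ h1 h2 => simp [TensorProduct.add_tmul, add_mul, mul_add, h1, h2]
    | tmul u w' =>
      simp [Algebra.TensorProduct.assoc_tmul, Algebra.TensorProduct.tmul_mul_tmul,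
        hS_antimul, mul_assoc]
  have P1 : ∀ Z Y : H ⊗[R] H,
      Tm S Z * kap comul S Y =
        Qm S ((Algebra.TensorProduct.assoc R R R H H H)
            ((Algebra.TensorProduct.map comul (AlgHom.id R H)) Y) *
          (Algebra.TensorProduct.map (AlgHom.id R H)
            (Algebra.TensorProduct.includeLeft : H →ₐ[R] H ⊗[R] H)) Z) := by
    intro Z Y
    induction Z using TensorProduct.induction_on with
    | zero => simp
    | add Z₁ Z₂ h1 h2 => simp [add_mul, mul_add, h1, h2]
    | tmul f' g' =>
      induction Y using TensorProduct.induction_on with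
      | zero => simp
      | add Y₁ Y₂ h1 h2 => simp only [map_add, mul_add, add_mul, h1, h2]
      | tmul f g =>
        simp only [Algebra.TensorProduct.map_tmul, AlgHom.coe_id, id_eq,
          Algebra.TensorProduct.includeLeft_apply, Tm_tmul, kap_tmul]
        rw [P0 (comul f) g f' g', ← hanti f, ← mul_assoc]
  have P2 : ∀ X Y : H ⊗[R] H,
      Qm S ((Algebra.TensorProduct.map (AlgHom.id R H) comul) X * ((1 : H) ⊗ₜ Y)) =
        wm S Y ⊗ₜ S ((TensorProduct.rid R H)
          ((Algebra.TensorProduct.map (AlgHom.id R H) counit) X)) := by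
    intro X Y
    induction X using TensorProduct.induction_on with
    | zero => simp
    | add X₁ X₂ h1 h2 => simp [map_add, add_mul, TensorProduct.tmul_add, h1, h2]
    | tmul f g =>
      simp only [Algebra.TensorProduct.map_tmul, AlgHom.coe_id, id_eq,
        Algebra.TensorProduct.tmul_mul_tmul, mul_one, one_mul, Qm_tmul,
        TensorProduct.rid_tmul, map_smul]
      rw [wm_comul_mul comul counit S hS_antimul antipode_left g Y,
        TensorProduct.smul_tmul]
  have hA : Psi comul S ((Algebra.TensorProduct.map (AlgHom.id R H) comul) F *
      (Algebra.TensorProduct.includeRight : H ⊗[R] H →ₐ[R] H ⊗[R] (H ⊗[R] H)) F) =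
      comul v * F := by
    rw [Algebra.TensorProduct.includeRight_apply, A1, A2, hv]
  have key : Tm S F * (comul v * F) = v ⊗ₜ v := by
    calc Tm S F * (comul v * F)
        = Tm S F * Psi comul S ((Algebra.TensorProduct.map (AlgHom.id R H) comul) F *
            (Algebra.TensorProduct.includeRight : H ⊗[R] H →ₐ[R] H ⊗[R] (H ⊗[R] H)) F) := by
          rw [hA]
      _ = Tm S F * Psi comul S ((Algebra.TensorProduct.assoc R R R H H H)
            ((Algebra.TensorProduct.map comul (AlgHom.id R H)) F) *
            (Algebra.TensorProduct.map (AlgHom.id R H)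
              (Algebra.TensorProduct.includeLeft : H →ₐ[R] H ⊗[R] H)) F) := by
          rw [hF_cocycle]
      _ = Tm S F * (kap comul S F * ((1 : H) ⊗ₜ v)) := by rw [B2 F F, hv]
      _ = (Tm S F * kap comul S F) * ((1 : H) ⊗ₜ v) := by rw [mul_assoc]
      _ = Qm S ((Algebra.TensorProduct.assoc R R R H H H)
            ((Algebra.TensorProduct.map comul (AlgHom.id R H)) F) *
            (Algebra.TensorProduct.map (AlgHom.id R H)
              (Algebra.TensorProduct.includeLeft : H →ₐ[R] H ⊗[R] H)) F) *
            ((1 : H) ⊗ₜ v) := by rw [P1 F F]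
      _ = Qm S ((Algebra.TensorProduct.map (AlgHom.id R H) comul) F *
            (Algebra.TensorProduct.includeRight : H ⊗[R] H →ₐ[R] H ⊗[R] (H ⊗[R] H)) F) *
            ((1 : H) ⊗ₜ v) := by rw [hF_cocycle]
      _ = Qm S ((Algebra.TensorProduct.map (AlgHom.id R H) comul) F * ((1 : H) ⊗ₜ F)) *
            ((1 : H) ⊗ₜ v) := by rw [Algebra.TensorProduct.includeRight_apply]
      _ = (v ⊗ₜ (1 : H)) * ((1 : H) ⊗ₜ v) := by
          rw [P2 F F, hv, hF_counit_right, hS_one]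
      _ = v ⊗ₜ v := by simp [Algebra.TensorProduct.tmul_mul_tmul]
  have hTF : Tm S Finv * Tm S F = 1 := by
    rw [← Tm_antimul S hS_antimul, hF_inv.1, Tm_one S hS_one]
  have final : comul v = Tm S Finv * (v ⊗ₜ v) * Finv := by
    calc comul v = 1 * comul v * 1 := by rw [one_mul, mul_one]
      _ = (Tm S Finv * Tm S F) * comul v * (F * Finv) := by rw [hTF, hF_inv.1]
      _ = Tm S Finv * (Tm S F * (comul v * F)) * Finv := by simp only [mul_assoc]
      _ = Tm S Finv * (v ⊗ₜ v) * Finv := by rw [key]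
  exact final
end

section
/- Let (U,R) be a quasitriangular Hopf algebra, u = m(S⊗id)(R₂₁) its Drinfeld element, F an invertible twist satisfying the cocycle and counit conditions, and v = m(S⊗id)(F). Then the Drinfeld element of the twisted Hopf algebra U_F, namely u_F = m(S_F⊗id)(R^F₂₁) with S_F = v⁻¹Sv and R^F = F₂₁⁻¹RF, equals v⁻¹S(v)u. -/
/-!
STATEMENT 12: Let `(U,R)` be a quasitriangular Hopf algebra, `u = m(S⊗id)(R₂₁)` its
Drinfeld element, `F` an invertible twist satisfying the cocycle and counit
conditions, and `v = m(S⊗id)(F)`.  Then the Drinfeld element of the twisted Hopf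
algebra `U_F`, namely `u_F = m(S_F⊗id)(R^F₂₁)` with `S_F(x) = v⁻¹S(x)v` and
`R^F = F₂₁⁻¹ R F`, equals `v⁻¹S(v)u`. -/

open TensorProduct


noncomputable def chiD {R H : Type*} [CommRing R] [Ring H] [Algebra R H]
    (S : H →ₗ[R] H) (c : H) : H ⊗[R] H →ₗ[R] H :=
  TensorProduct.lift (LinearMap.mk₂ R (fun a b => S a * c * b)
    (fun a a' b => by simp [map_add, add_mul])
    (fun r a b => by simp [smul_mul_assoc])
    (fun a b b' => by simp [mul_add])
    (fun r a b => by simp [mul_smul_comm]))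

@[simp] lemma chiD_tmul {R H : Type*} [CommRing R] [Ring H] [Algebra R H]
    (S : H →ₗ[R] H) (c a b : H) : chiD S c (a ⊗ₜ[R] b) = S a * c * b := rfl

noncomputable def psiD {R H : Type*} [CommRing R] [Ring H] [Algebra R H]
    (S : H →ₗ[R] H) : H ⊗[R] H →ₗ[R] H := (LinearMap.mul' R H).comp (S.rTensor H)

@[simp] lemma psiD_tmul {R H : Type*} [CommRing R] [Ring H] [Algebra R H]
    (S : H →ₗ[R] H) (a b : H) : psiD S (a ⊗ₜ[R] b) = S a * b := rfl

noncomputable def PhiA {R H : Type*} [CommRing R] [Ring H] [Algebra R H]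
    (S : H →ₗ[R] H) (u : H) : (H ⊗[R] H) ⊗[R] H →ₗ[R] H :=
  TensorProduct.lift (LinearMap.mk₂ R
    (fun t c => S (S c) * chiD S u ((Algebra.TensorProduct.comm R H H) t))
    (fun t t' c => by simp [map_add, mul_add])
    (fun r t c => by simp [mul_smul_comm])
    (fun t c c' => by simp [map_add, add_mul])
    (fun r t c => by simp [smul_mul_assoc]))

@[simp] lemma PhiA_tmul {R H : Type*} [CommRing R] [Ring H] [Algebra R H]
    (S : H →ₗ[R] H) (u : H) (t : H ⊗[R] H) (c : H) :
    PhiA S u (t ⊗ₜ[R] c) = S (S c) * chiD S u ((Algebra.TensorProduct.comm R H H) t) := rfl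

noncomputable def PhiB {R H : Type*} [CommRing R] [Ring H] [Algebra R H]
    (S : H →ₗ[R] H) (u : H) : H ⊗[R] (H ⊗[R] H) →ₗ[R] H :=
  TensorProduct.lift (LinearMap.mk₂ R
    (fun a t => S (LinearMap.mul' R H (S.lTensor H t)) * u * a)
    (fun a a' t => by simp [mul_add])
    (fun r a t => by simp [mul_smul_comm])
    (fun a t t' => by simp [map_add, add_mul])
    (fun r a t => by simp [smul_mul_assoc]))

@[simp] lemma PhiB_tmul {R H : Type*} [CommRing R] [Ring H] [Algebra R H]
    (S : H →ₗ[R] H) (u : H) (a : H) (t : H ⊗[R] H) :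
    PhiB S u (a ⊗ₜ[R] t) = S (LinearMap.mul' R H (S.lTensor H t)) * u * a := rfl

theorem stmt12 (R H : Type*) [CommRing R] [Ring H] [Algebra R H]
    (comul : H →ₐ[R] H ⊗[R] H)
    (counit : H →ₐ[R] R)
    (S : H →ₗ[R] H)
    (hS_antimul : ∀ x y : H, S (x * y) = S y * S x)
    (hS_one : S 1 = 1)
    (coassoc : ∀ x : H,
      (Algebra.TensorProduct.assoc R R R H H H)
          ((Algebra.TensorProduct.map comul (AlgHom.id R H)) (comul x)) =
        (Algebra.TensorProduct.map (AlgHom.id R H) comul) (comul x))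
    (counit_left : ∀ x : H,
      (TensorProduct.lid R H) ((Algebra.TensorProduct.map counit (AlgHom.id R H)) (comul x)) = x)
    (counit_right : ∀ x : H,
      (TensorProduct.rid R H) ((Algebra.TensorProduct.map (AlgHom.id R H) counit) (comul x)) = x)
    (antipode_left : ∀ x : H,
      LinearMap.mul' R H ((S.rTensor H) (comul x)) = algebraMap R H (counit x))
    (antipode_right : ∀ x : H,
      LinearMap.mul' R H ((S.lTensor H) (comul x)) = algebraMap R H (counit x))
    (Rm Rminv : H ⊗[R] H)
    (hRm_inv : Rm * Rminv = 1 ∧ Rminv * Rm = 1)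
    (hRm_intertwine : ∀ x : H,
      Rm * comul x = (Algebra.TensorProduct.comm R H H) (comul x) * Rm)
    (hRm_hex1 :
      (Algebra.TensorProduct.assoc R R R H H H)
          ((Algebra.TensorProduct.map comul (AlgHom.id R H)) Rm) =
        (Algebra.TensorProduct.map (AlgHom.id R H)
          (Algebra.TensorProduct.includeRight : H →ₐ[R] H ⊗[R] H)) Rm *
        (Algebra.TensorProduct.includeRight : H ⊗[R] H →ₐ[R] H ⊗[R] (H ⊗[R] H)) Rm)
    (hRm_hex2 :
      (Algebra.TensorProduct.map (AlgHom.id R H) comul) Rm =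
        (Algebra.TensorProduct.map (AlgHom.id R H)
          (Algebra.TensorProduct.includeRight : H →ₐ[R] H ⊗[R] H)) Rm *
        (Algebra.TensorProduct.map (AlgHom.id R H)
          (Algebra.TensorProduct.includeLeft : H →ₐ[R] H ⊗[R] H)) Rm)
    (F Finv : H ⊗[R] H)
    (hF_inv : F * Finv = 1 ∧ Finv * F = 1)
    (hF_cocycle :
      (Algebra.TensorProduct.assoc R R R H H H)
          ((Algebra.TensorProduct.map comul (AlgHom.id R H)) F) *
        (Algebra.TensorProduct.map (AlgHom.id R H)
          (Algebra.TensorProduct.includeLeft : H →ₐ[R] H ⊗[R] H)) F =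
      (Algebra.TensorProduct.map (AlgHom.id R H) comul) F *
        (Algebra.TensorProduct.includeRight : H ⊗[R] H →ₐ[R] H ⊗[R] (H ⊗[R] H)) F)
    (hFinv_cocycle :
      (Algebra.TensorProduct.map (AlgHom.id R H)
          (Algebra.TensorProduct.includeLeft : H →ₐ[R] H ⊗[R] H)) Finv *
        (Algebra.TensorProduct.assoc R R R H H H)
          ((Algebra.TensorProduct.map comul (AlgHom.id R H)) Finv) =
      (Algebra.TensorProduct.includeRight : H ⊗[R] H →ₐ[R] H ⊗[R] (H ⊗[R] H)) Finv *
        (Algebra.TensorProduct.map (AlgHom.id R H) comul) Finv)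
    (hF_counit_left :
      (TensorProduct.lid R H) ((Algebra.TensorProduct.map counit (AlgHom.id R H)) F) = 1)
    (hF_counit_right :
      (TensorProduct.rid R H) ((Algebra.TensorProduct.map (AlgHom.id R H) counit) F) = 1)
    (hFinv_counit_left :
      (TensorProduct.lid R H) ((Algebra.TensorProduct.map counit (AlgHom.id R H)) Finv) = 1)
    (hFinv_counit_right :
      (TensorProduct.rid R H) ((Algebra.TensorProduct.map (AlgHom.id R H) counit) Finv) = 1)
    (v vinv : H)
    (hv : v = LinearMap.mul' R H ((S.rTensor H) F))
    (hv_inv : v * vinv = 1 ∧ vinv * v = 1) :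
    let u : H := LinearMap.mul' R H ((S.rTensor H) ((Algebra.TensorProduct.comm R H H) Rm))
    let SF : H →ₗ[R] H :=
      (LinearMap.mulLeft R vinv).comp ((LinearMap.mulRight R v).comp S)
    let RF : H ⊗[R] H := (Algebra.TensorProduct.comm R H H) Finv * Rm * F
    let uF : H := LinearMap.mul' R H ((SF.rTensor H) ((Algebra.TensorProduct.comm R H H) RF))
    uF = vinv * S v * u := by
  intro u SF RF uF
  have hu : u = psiD S ((Algebra.TensorProduct.comm R H H) Rm) := rfl
  -- chiD is additive in the middle element
  have hchi_add_c : ∀ (c c' : H) (T : H ⊗[R] H),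
      chiD S (c + c') T = chiD S c T + chiD S c' T := by
    intro c c' T
    induction T using TensorProduct.induction_on with
    | zero => simp
    | tmul a b => simp [mul_add, add_mul]
    | add x y hx hy => simp [hx, hy]; abel
  have hchi_zero_c : ∀ T : H ⊗[R] H, chiD S (0 : H) T = 0 := by
    intro T
    induction T using TensorProduct.induction_on with
    | zero => simp
    | tmul a b => simp
    | add x y hx hy => simp [hx, hy]
  -- key multiplicativity lemma
  have h_mulpsi : ∀ P Q : H ⊗[R] H, psiD S (P * Q) = chiD S (psiD S P) Q := by
    intro P Q
    induction P using TensorProduct.induction_on with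
    | zero => simp [hchi_zero_c]
    | tmul a b =>
        induction Q using TensorProduct.induction_on with
        | zero => simp
        | tmul c d =>
            rw [Algebra.TensorProduct.tmul_mul_tmul]
            simp [hS_antimul, mul_assoc]
        | add q1 q2 h1 h2 => simp [mul_add, h1, h2]
    | add p1 p2 h1 h2 => simp [add_mul, h1, h2, hchi_add_c]
  have h_chi_alg : ∀ (r : R) (T : H ⊗[R] H),
      chiD S (algebraMap R H r) T = algebraMap R H r * psiD S T := by
    intro r T
    induction T using TensorProduct.induction_on with
    | zero => simp
    | tmul a b => rw [chiD_tmul, psiD_tmul, ← Algebra.commutes, mul_assoc]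
    | add x y hx hy => simp [hx, hy, mul_add]
  have h_ss : ∀ T : H ⊗[R] H,
      (Algebra.TensorProduct.comm R H H) ((Algebra.TensorProduct.comm R H H) T) = T := by
    intro T
    induction T using TensorProduct.induction_on with
    | zero => simp
    | tmul a b => simp [Algebra.TensorProduct.comm_tmul]
    | add x y hx hy => simp [hx, hy]
  -- the "star" lemma
  have h_star : ∀ x : H,
      chiD S u ((Algebra.TensorProduct.comm R H H) (comul x)) =
        algebraMap R H (counit x) * u := by
    intro x
    have h1 := congrArg (fun T => psiD S ((Algebra.TensorProduct.comm R H H) T))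
      (hRm_intertwine x)
    simp only [map_mul] at h1
    rw [h_ss] at h1
    rw [h_mulpsi, h_mulpsi] at h1
    have h2 : psiD S (comul x) = algebraMap R H (counit x) := antipode_left x
    rw [h2, h_chi_alg, ← hu] at h1
    exact h1
  have hSalg : ∀ r : R, S (algebraMap R H r) = algebraMap R H r := by
    intro r
    rw [Algebra.algebraMap_eq_smul_one, map_smul, hS_one]
  -- Drinfeld element property: u * h = S (S h) * u
  have h_drinfeld : ∀ x : H, u * x = S (S x) * u := by
    intro x
    have route1 : ∀ T : H ⊗[R] H,
        PhiA S u ((Algebra.TensorProduct.map comul (AlgHom.id R H)) T) =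
        S (S ((TensorProduct.lid R H)
          ((Algebra.TensorProduct.map counit (AlgHom.id R H)) T))) * u := by
      intro T
      induction T using TensorProduct.induction_on with
      | zero => simp
      | tmul a c =>
          rw [Algebra.TensorProduct.map_tmul, Algebra.TensorProduct.map_tmul]
          simp only [AlgHom.coe_id, id_eq, PhiA_tmul, TensorProduct.lid_tmul,
            map_smul, smul_mul_assoc]
          rw [h_star, ← mul_assoc, ← Algebra.commutes, ← Algebra.smul_def,
            smul_mul_assoc]
      | add x y hx hy => simp [map_add, add_mul, hx, hy]
    have route2 : ∀ T : H ⊗[R] H,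
        PhiB S u ((Algebra.TensorProduct.map (AlgHom.id R H) comul) T) =
        u * ((TensorProduct.rid R H)
          ((Algebra.TensorProduct.map (AlgHom.id R H) counit) T)) := by
      intro T
      induction T using TensorProduct.induction_on with
      | zero => simp
      | tmul a b =>
          rw [Algebra.TensorProduct.map_tmul, Algebra.TensorProduct.map_tmul]
          simp only [AlgHom.coe_id, id_eq, PhiB_tmul, TensorProduct.rid_tmul]
          rw [antipode_right, hSalg, mul_assoc, ← Algebra.smul_def, ← mul_smul_comm]
      | add x y hx hy => simp [map_add, mul_add, hx, hy]
    have hassoc_compat : ∀ X : (H ⊗[R] H) ⊗[R] H,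
        PhiB S u ((Algebra.TensorProduct.assoc R R R H H H) X) = PhiA S u X := by
      intro X
      induction X using TensorProduct.induction_on with
      | zero => simp
      | tmul t c =>
          induction t using TensorProduct.induction_on with
          | zero => simp [TensorProduct.zero_tmul]
          | tmul a b =>
              rw [Algebra.TensorProduct.assoc_tmul]
              simp only [PhiB_tmul, PhiA_tmul, Algebra.TensorProduct.comm_tmul,
                chiD_tmul, LinearMap.lTensor_tmul, LinearMap.mul'_apply]
              rw [hS_antimul]
              simp [mul_assoc]
          | add t1 t2 h1 h2 => simp [TensorProduct.add_tmul, map_add, h1, h2]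
      | add x y hx hy => simp [map_add, hx, hy]
    have e1 := route1 (comul x)
    rw [counit_left] at e1
    have e2 := route2 (comul x)
    rw [counit_right] at e2
    have e3 := hassoc_compat ((Algebra.TensorProduct.map comul (AlgHom.id R H)) (comul x))
    rw [coassoc x] at e3
    rw [e1, e2] at e3
    exact e3
  -- twisted antipode applied through the tensor
  have hSF : ∀ T : H ⊗[R] H,
      LinearMap.mul' R H ((SF.rTensor H) T) = vinv * chiD S v T := by
    intro T
    have hSFa : ∀ a : H, SF a = vinv * (S a * v) := fun a => rfl
    induction T using TensorProduct.induction_on with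
    | zero => simp
    | tmul a b =>
        rw [LinearMap.rTensor_tmul, LinearMap.mul'_apply, chiD_tmul, hSFa]
        simp [mul_assoc]
    | add x y hx hy => simp [map_add, mul_add, hx, hy]
  have hL5 : ∀ T : H ⊗[R] H,
      chiD S u ((Algebra.TensorProduct.comm R H H) T) = S (psiD S T) * u := by
    intro T
    induction T using TensorProduct.induction_on with
    | zero => simp
    | tmul a b =>
        simp only [Algebra.TensorProduct.comm_tmul, chiD_tmul, psiD_tmul, hS_antimul]
        rw [mul_assoc, h_drinfeld a, ← mul_assoc]
    | add x y hx hy => simp [map_add, add_mul, hx, hy]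
  -- assemble
  have hv' : v = psiD S F := hv
  have hRF : (Algebra.TensorProduct.comm R H H) RF =
      Finv * ((Algebra.TensorProduct.comm R H H) Rm *
        (Algebra.TensorProduct.comm R H H) F) := by
    have hRFdef : RF = (Algebra.TensorProduct.comm R H H) Finv * Rm * F := rfl
    rw [hRFdef, map_mul, map_mul, h_ss, mul_assoc]
  have huF : uF = LinearMap.mul' R H
      ((SF.rTensor H) ((Algebra.TensorProduct.comm R H H) RF)) := rfl
  rw [huF, hSF, hRF, hv', ← h_mulpsi, ← mul_assoc, ← mul_assoc, hF_inv.1, one_mul,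
    h_mulpsi, ← hu, hL5, ← hv', ← mul_assoc]
end

section
/- Let (U,R,θ) be a ribbon Hopf algebra and F an invertible twist satisfying the cocycle and counit conditions. Then the twisted quasitriangular Hopf algebra (U_F, R^F) is again a ribbon Hopf algebra with ribbon element θ_F = θ; in particular θ is central in U_F, θ² = u_F S_F(u_F), S_F(θ)=θ, ε_F(θ)=1, and Δ_F(θ) = (R^F₂₁ R^F)⁻¹(θ⊗θ). -/
/-!
STATEMENT 13: Let `(U,R,θ)` be a ribbon Hopf algebra and `F` an invertible twist
satisfying the cocycle and counit conditions.  Then the twisted quasitriangular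
Hopf algebra `(U_F, R^F)` is again a ribbon Hopf algebra with ribbon element
`θ_F = θ`: in particular `θ` is central in `U_F`, `θ² = u_F S_F(u_F)`, `S_F(θ) = θ`,
`ε_F(θ) = 1`, and `Δ_F(θ) = (R^F₂₁ R^F)⁻¹(θ⊗θ)`.

Here `u = m(S⊗id)(R₂₁)` is the Drinfeld element, `v = m(S⊗id)(F)`,
`S_F(x) = v⁻¹S(x)v`, `Δ_F = F⁻¹ΔF`, `ε_F = ε`, `R^F = F₂₁⁻¹RF` (so
`(R^F)⁻¹ = F⁻¹R⁻¹F₂₁` and `(R^F₂₁)⁻¹ = F₂₁⁻¹R₂₁⁻¹F`), and `u_F = m(S_F⊗id)(R^F₂₁)`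
is the Drinfeld element of `(U_F, R^F)`. -/

open TensorProduct


namespace Stmt13Aux
variable {R H : Type*} [CommRing R] [Ring H] [Algebra R H]

/-- `phi S (a ⊗ b) = S a * b`. -/
noncomputable def phi (S : H →ₗ[R] H) : H ⊗[R] H →ₗ[R] H :=
  (LinearMap.mul' R H) ∘ₗ (S.rTensor H)

/-- `q S (a ⊗ b) = a * S b`. -/
noncomputable def q (S : H →ₗ[R] H) : H ⊗[R] H →ₗ[R] H :=
  (LinearMap.mul' R H) ∘ₗ (S.lTensor H)

/-- `B S c (a ⊗ b) = S a * c * b`. -/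
noncomputable def B (S : H →ₗ[R] H) (c : H) : H ⊗[R] H →ₗ[R] H :=
  (LinearMap.mul' R H) ∘ₗ (((LinearMap.mulRight R c) ∘ₗ S).rTensor H)

/-- `A S c (a ⊗ b) = S b * c * a`. -/
noncomputable def A (S : H →ₗ[R] H) (c : H) : H ⊗[R] H →ₗ[R] H :=
  (B S c) ∘ₗ (Algebra.TensorProduct.comm R H H).toLinearMap

/-- `T S c (a ⊗ (b ⊗ d)) = S (b * S d) * c * a`. -/
noncomputable def T (S : H →ₗ[R] H) (c : H) : H ⊗[R] (H ⊗[R] H) →ₗ[R] H :=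
  (A S c) ∘ₗ (LinearMap.lTensor H (q S))

@[simp] lemma phi_tmul (S : H →ₗ[R] H) (a b : H) : phi S (a ⊗ₜ[R] b) = S a * b := rfl

@[simp] lemma q_tmul (S : H →ₗ[R] H) (a b : H) : q S (a ⊗ₜ[R] b) = a * S b := rfl

@[simp] lemma B_tmul (S : H →ₗ[R] H) (c a b : H) : B S c (a ⊗ₜ[R] b) = S a * c * b := rfl

@[simp] lemma A_tmul (S : H →ₗ[R] H) (c a b : H) : A S c (a ⊗ₜ[R] b) = S b * c * a := rfl

@[simp] lemma T_tmul (S : H →ₗ[R] H) (c a : H) (w : H ⊗[R] H) :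
    T S c (a ⊗ₜ[R] w) = A S c (a ⊗ₜ[R] (q S w)) := rfl

end Stmt13Aux

open Stmt13Aux in
theorem stmt13 (R H : Type*) [CommRing R] [Ring H] [Algebra R H]
    (comul : H →ₐ[R] H ⊗[R] H)
    (counit : H →ₐ[R] R)
    (S : H →ₗ[R] H)
    (hS_antimul : ∀ x y : H, S (x * y) = S y * S x)
    (hS_one : S 1 = 1)
    (coassoc : ∀ x : H,
      (Algebra.TensorProduct.assoc R R R H H H)
          ((Algebra.TensorProduct.map comul (AlgHom.id R H)) (comul x)) =
        (Algebra.TensorProduct.map (AlgHom.id R H) comul) (comul x))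
    (counit_left : ∀ x : H,
      (TensorProduct.lid R H) ((Algebra.TensorProduct.map counit (AlgHom.id R H)) (comul x)) = x)
    (counit_right : ∀ x : H,
      (TensorProduct.rid R H) ((Algebra.TensorProduct.map (AlgHom.id R H) counit) (comul x)) = x)
    (antipode_left : ∀ x : H,
      LinearMap.mul' R H ((S.rTensor H) (comul x)) = algebraMap R H (counit x))
    (antipode_right : ∀ x : H,
      LinearMap.mul' R H ((S.lTensor H) (comul x)) = algebraMap R H (counit x))
    (Rm Rminv : H ⊗[R] H)
    (hRm_inv : Rm * Rminv = 1 ∧ Rminv * Rm = 1)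
    (hRm_intertwine : ∀ x : H,
      Rm * comul x = (Algebra.TensorProduct.comm R H H) (comul x) * Rm)
    (hRm_hex1 :
      (Algebra.TensorProduct.assoc R R R H H H)
          ((Algebra.TensorProduct.map comul (AlgHom.id R H)) Rm) =
        (Algebra.TensorProduct.map (AlgHom.id R H)
          (Algebra.TensorProduct.includeRight : H →ₐ[R] H ⊗[R] H)) Rm *
        (Algebra.TensorProduct.includeRight : H ⊗[R] H →ₐ[R] H ⊗[R] (H ⊗[R] H)) Rm)
    (hRm_hex2 :
      (Algebra.TensorProduct.map (AlgHom.id R H) comul) Rm =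
        (Algebra.TensorProduct.map (AlgHom.id R H)
          (Algebra.TensorProduct.includeRight : H →ₐ[R] H ⊗[R] H)) Rm *
        (Algebra.TensorProduct.map (AlgHom.id R H)
          (Algebra.TensorProduct.includeLeft : H →ₐ[R] H ⊗[R] H)) Rm)
    (F Finv : H ⊗[R] H)
    (hF_inv : F * Finv = 1 ∧ Finv * F = 1)
    (hF_cocycle :
      (Algebra.TensorProduct.assoc R R R H H H)
          ((Algebra.TensorProduct.map comul (AlgHom.id R H)) F) *
        (Algebra.TensorProduct.map (AlgHom.id R H)
          (Algebra.TensorProduct.includeLeft : H →ₐ[R] H ⊗[R] H)) F =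
      (Algebra.TensorProduct.map (AlgHom.id R H) comul) F *
        (Algebra.TensorProduct.includeRight : H ⊗[R] H →ₐ[R] H ⊗[R] (H ⊗[R] H)) F)
    (hFinv_cocycle :
      (Algebra.TensorProduct.map (AlgHom.id R H)
          (Algebra.TensorProduct.includeLeft : H →ₐ[R] H ⊗[R] H)) Finv *
        (Algebra.TensorProduct.assoc R R R H H H)
          ((Algebra.TensorProduct.map comul (AlgHom.id R H)) Finv) =
      (Algebra.TensorProduct.includeRight : H ⊗[R] H →ₐ[R] H ⊗[R] (H ⊗[R] H)) Finv *
        (Algebra.TensorProduct.map (AlgHom.id R H) comul) Finv)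
    (hF_counit_left :
      (TensorProduct.lid R H) ((Algebra.TensorProduct.map counit (AlgHom.id R H)) F) = 1)
    (hF_counit_right :
      (TensorProduct.rid R H) ((Algebra.TensorProduct.map (AlgHom.id R H) counit) F) = 1)
    (hFinv_counit_left :
      (TensorProduct.lid R H) ((Algebra.TensorProduct.map counit (AlgHom.id R H)) Finv) = 1)
    (hFinv_counit_right :
      (TensorProduct.rid R H) ((Algebra.TensorProduct.map (AlgHom.id R H) counit) Finv) = 1)
    (v vinv : H)
    (hv : v = LinearMap.mul' R H ((S.rTensor H) F))
    (hv_inv : v * vinv = 1 ∧ vinv * v = 1)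
    -- the ribbon element θ
    (θ : H)
    (hθ_central : ∀ x : H, θ * x = x * θ)
    (hθ_sq : θ * θ =
      LinearMap.mul' R H ((S.rTensor H) ((Algebra.TensorProduct.comm R H H) Rm)) *
        S (LinearMap.mul' R H ((S.rTensor H) ((Algebra.TensorProduct.comm R H H) Rm))))
    (hθ_S : S θ = θ)
    (hθ_counit : counit θ = 1)
    (hθ_comul : comul θ =
      (Rminv * (Algebra.TensorProduct.comm R H H) Rminv) * (θ ⊗ₜ θ)) :
    let u : H := LinearMap.mul' R H ((S.rTensor H) ((Algebra.TensorProduct.comm R H H) Rm))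
    let SF : H →ₗ[R] H :=
      (LinearMap.mulLeft R vinv).comp ((LinearMap.mulRight R v).comp S)
    let RF : H ⊗[R] H := (Algebra.TensorProduct.comm R H H) Finv * Rm * F
    let uF : H := LinearMap.mul' R H ((SF.rTensor H) ((Algebra.TensorProduct.comm R H H) RF))
    -- θ_F = θ is a ribbon element for the twisted structure:
    (∀ x : H, θ * x = x * θ) ∧
    θ * θ = uF * SF uF ∧
    SF θ = θ ∧
    counit θ = 1 ∧
    Finv * comul θ * F =
      ((Finv * Rminv * (Algebra.TensorProduct.comm R H H) F) *
        ((Algebra.TensorProduct.comm R H H) Finv *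
          (Algebra.TensorProduct.comm R H H) Rminv * F)) * (θ ⊗ₜ θ) := by
  intro u SF RF uF
  have hu_def : u = phi S ((Algebra.TensorProduct.comm R H H) Rm) := rfl
  have hphiF : phi S F = v := hv.symm
  have hθ_sq' : θ * θ = u * S u := hθ_sq
  -- `comm` is an involution
  have hττ : ∀ Z : H ⊗[R] H,
      (Algebra.TensorProduct.comm R H H) ((Algebra.TensorProduct.comm R H H) Z) = Z := by
    intro Z
    induction Z using TensorProduct.induction_on with
    | zero => simp
    | tmul a b => simp
    | add x y hx hy => simp [hx, hy]
  -- phi and right multiplication by a simple tensor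
  have h1 : ∀ (Z : H ⊗[R] H) (x y : H),
      phi S (Z * (x ⊗ₜ[R] y)) = S x * phi S Z * y := by
    intro Z x y
    induction Z using TensorProduct.induction_on with
    | zero => simp
    | tmul a b =>
        simp [Algebra.TensorProduct.tmul_mul_tmul, hS_antimul, mul_assoc]
    | add Z₁ Z₂ ih1 ih2 => simp [add_mul, mul_add, ih1, ih2]
  -- phi of a product
  have hC : ∀ Y Z : H ⊗[R] H, phi S (Y * Z) = B S (phi S Y) Z := by
    intro Y Z
    induction Z using TensorProduct.induction_on with
    | zero => simp
    | tmul x y => rw [h1]; simp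
    | add Z₁ Z₂ ih1 ih2 => rw [mul_add, map_add, map_add, ih1, ih2]
  have hBalg : ∀ (c : R) (Z : H ⊗[R] H),
      B S (algebraMap R H c) Z = c • phi S Z := by
    intro c Z
    induction Z using TensorProduct.induction_on with
    | zero => simp
    | tmul x y =>
        simp [Algebra.algebraMap_eq_smul_one, mul_smul_comm, smul_mul_assoc]
    | add Z₁ Z₂ ih1 ih2 => simp [ih1, ih2]
  have hSalg : ∀ c : R, S (algebraMap R H c) = algebraMap R H c := by
    intro c
    rw [Algebra.algebraMap_eq_smul_one, map_smul, hS_one]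
  -- the key identity  Σ S(x₂) u x₁ = ε(x) u
  have hA : ∀ x : H, A S u (comul x) = counit x • u := by
    intro x
    calc A S u (comul x)
        = B S (phi S ((Algebra.TensorProduct.comm R H H) Rm))
            ((Algebra.TensorProduct.comm R H H) (comul x)) := rfl
      _ = phi S ((Algebra.TensorProduct.comm R H H) Rm *
            (Algebra.TensorProduct.comm R H H) (comul x)) := (hC _ _).symm
      _ = phi S ((Algebra.TensorProduct.comm R H H) (Rm * comul x)) := by
            rw [map_mul (Algebra.TensorProduct.comm R H H) Rm (comul x)]
      _ = phi S ((Algebra.TensorProduct.comm R H H)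
            ((Algebra.TensorProduct.comm R H H) (comul x) * Rm)) := by
            rw [hRm_intertwine]
      _ = phi S ((Algebra.TensorProduct.comm R H H)
            ((Algebra.TensorProduct.comm R H H) (comul x)) *
            (Algebra.TensorProduct.comm R H H) Rm) := by rw [map_mul]
      _ = phi S (comul x * (Algebra.TensorProduct.comm R H H) Rm) := by rw [hττ]
      _ = B S (phi S (comul x)) ((Algebra.TensorProduct.comm R H H) Rm) := hC _ _
      _ = B S (algebraMap R H (counit x)) ((Algebra.TensorProduct.comm R H H) Rm) := by
            rw [show phi S (comul x) = algebraMap R H (counit x) from antipode_left x]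
      _ = counit x • phi S ((Algebra.TensorProduct.comm R H H) Rm) := hBalg _ _
      _ = counit x • u := by rw [← hu_def]
  have hE1 : ∀ Y : H ⊗[R] H,
      T S u ((Algebra.TensorProduct.map (AlgHom.id R H) comul) Y) =
        u * (TensorProduct.rid R H)
          ((Algebra.TensorProduct.map (AlgHom.id R H) counit) Y) := by
    intro Y
    induction Y using TensorProduct.induction_on with
    | zero => simp
    | tmul y z =>
        have hq : q S (comul z) = algebraMap R H (counit z) := antipode_right z
        have ht : (Algebra.TensorProduct.map (AlgHom.id R H) comul) (y ⊗ₜ[R] z) =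
            y ⊗ₜ[R] comul z := by simp
        have hr : (Algebra.TensorProduct.map (AlgHom.id R H) counit) (y ⊗ₜ[R] z) =
            y ⊗ₜ[R] counit z := by simp
        rw [ht, hr, T_tmul, hq, A_tmul, hSalg, TensorProduct.rid_tmul]
        rw [mul_smul_comm, Algebra.smul_def, mul_assoc]
    | add Y₁ Y₂ ih1 ih2 => simp [ih1, ih2, mul_add]
  have hS1 : ∀ (W : H ⊗[R] H) (z : H),
      T S u ((Algebra.TensorProduct.assoc R R R H H H) (W ⊗ₜ[R] z)) = S (S z) * A S u W := by
    intro W z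
    induction W using TensorProduct.induction_on with
    | zero => simp [TensorProduct.zero_tmul]
    | tmul a b =>
        rw [Algebra.TensorProduct.assoc_tmul, T_tmul, q_tmul, A_tmul, A_tmul,
          hS_antimul]
        simp [mul_assoc]
    | add W₁ W₂ ih1 ih2 => simp [TensorProduct.add_tmul, ih1, ih2, mul_add]
  have hE2 : ∀ Y : H ⊗[R] H,
      T S u ((Algebra.TensorProduct.assoc R R R H H H)
          ((Algebra.TensorProduct.map comul (AlgHom.id R H)) Y)) =
        S (S ((TensorProduct.lid R H)
          ((Algebra.TensorProduct.map counit (AlgHom.id R H)) Y))) * u := by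
    intro Y
    induction Y using TensorProduct.induction_on with
    | zero => simp
    | tmul y z =>
        have hm : (Algebra.TensorProduct.map comul (AlgHom.id R H)) (y ⊗ₜ[R] z) =
            comul y ⊗ₜ[R] z := by simp
        have hm' : (Algebra.TensorProduct.map counit (AlgHom.id R H)) (y ⊗ₜ[R] z) =
            counit y ⊗ₜ[R] z := by simp
        rw [hm, hm', hS1, hA, TensorProduct.lid_tmul, map_smul, map_smul]
        rw [mul_smul_comm, smul_mul_assoc]
    | add Y₁ Y₂ ih1 ih2 => simp [ih1, ih2, add_mul]
  -- Drinfeld's lemma:  u x = S²(x) u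
  have hu2 : ∀ x : H, u * x = S (S x) * u := by
    intro x
    have e1' := hE1 (comul x)
    rw [counit_right] at e1'
    have e2' := hE2 (comul x)
    rw [counit_left] at e2'
    rw [coassoc x] at e2'
    rw [← e1']
    exact e2'
  have hG4 : ∀ Z : H ⊗[R] H,
      B S u ((Algebra.TensorProduct.comm R H H) Z) = S (phi S Z) * u := by
    intro Z
    induction Z using TensorProduct.induction_on with
    | zero => simp
    | tmul a b =>
        rw [Algebra.TensorProduct.comm_tmul, B_tmul, phi_tmul,
          mul_assoc (S b) u a, hu2 a, hS_antimul (S a) b]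
        simp [mul_assoc]
    | add Z₁ Z₂ ih1 ih2 => simp [ih1, ih2, add_mul]
  have hSFr : ∀ Z : H ⊗[R] H,
      LinearMap.mul' R H
        ((((LinearMap.mulLeft R vinv).comp
            ((LinearMap.mulRight R v).comp S)).rTensor H) Z) =
      vinv * B S v Z := by
    intro Z
    induction Z using TensorProduct.induction_on with
    | zero => simp
    | tmul a b => simp [mul_assoc]
    | add Z₁ Z₂ ih1 ih2 => simp [ih1, ih2, mul_add]
  -- the formula u_F = v⁻¹ S(v) u
  have huF : uF = vinv * (S v * u) := by
    have h0 : uF = vinv * B S v ((Algebra.TensorProduct.comm R H H) RF) := hSFr _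
    rw [h0]
    have hRF : (Algebra.TensorProduct.comm R H H) RF =
        Finv * (Algebra.TensorProduct.comm R H H) Rm *
          (Algebra.TensorProduct.comm R H H) F := by
      show (Algebra.TensorProduct.comm R H H)
          ((Algebra.TensorProduct.comm R H H) Finv * Rm * F) = _
      rw [map_mul, map_mul, hττ]
    have hBv : ∀ Z : H ⊗[R] H, B S v Z = phi S (F * Z) := by
      intro Z; rw [hC, hphiF]
    rw [hRF, hBv]
    have hcol : F * (Finv * (Algebra.TensorProduct.comm R H H) Rm *
        (Algebra.TensorProduct.comm R H H) F) =
        (Algebra.TensorProduct.comm R H H) Rm *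
          (Algebra.TensorProduct.comm R H H) F := by
      rw [← mul_assoc, ← mul_assoc, hF_inv.1, one_mul]
    rw [hcol, hC, ← hu_def, hG4, hphiF]
  have hθθ : ∀ w : H, θ * θ * w = w * (θ * θ) := by
    intro w
    rw [mul_assoc, hθ_central w, ← mul_assoc, hθ_central w, mul_assoc]
  have e1 : S v * S vinv = 1 := by rw [← hS_antimul, hv_inv.2, hS_one]
  have e2 : S (S vinv) * S (S v) = 1 := by rw [← hS_antimul, e1, hS_one]
  refine ⟨hθ_central, ?_, ?_, hθ_counit, ?_⟩
  · -- θ² = u_F S_F(u_F)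
    have e0 : SF uF = vinv * (S uF * v) := rfl
    rw [e0, huF]
    rw [hS_antimul vinv (S v * u), hS_antimul (S v) u]
    simp only [mul_assoc]
    rw [← mul_assoc u vinv, hu2 vinv, mul_assoc]
    rw [← mul_assoc u (S u), ← hθ_sq']
    rw [hθθ]
    simp only [mul_assoc]
    rw [← mul_assoc (S (S vinv)) (S (S v)), e2, one_mul]
    rw [← mul_assoc (S v) (S vinv), e1, one_mul]
    rw [← mul_assoc vinv v, hv_inv.2, one_mul]
  · -- S_F(θ) = θ
    show vinv * (S θ * v) = θ
    rw [hθ_S, hθ_central v, ← mul_assoc, hv_inv.2, one_mul]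
  · -- the comultiplication identity
    have hθθZ : ∀ Z : H ⊗[R] H, (θ ⊗ₜ[R] θ) * Z = Z * (θ ⊗ₜ[R] θ) := by
      intro Z
      induction Z using TensorProduct.induction_on with
      | zero => simp
      | tmul a b =>
          simp [Algebra.TensorProduct.tmul_mul_tmul, hθ_central a, hθ_central b]
      | add Z₁ Z₂ ih1 ih2 => simp [mul_add, add_mul, ih1, ih2]
    rw [hθ_comul]
    simp only [mul_assoc]
    rw [hθθZ F]
    rw [← mul_assoc ((Algebra.TensorProduct.comm R H H) F)
      ((Algebra.TensorProduct.comm R H H) Finv), ← map_mul, hF_inv.1, map_one, one_mul]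
end

section
/- In a quasitriangular Hopf algebra (U,R), the Drinfeld element u = m(S⊗id)(R₂₁) satisfies ε(u) = 1 and Δ(u) = (R₂₁R)⁻¹(u⊗u) = (u⊗u)(R₂₁R)⁻¹, and consequently Δ(uS(u)) = (R₂₁R)⁻²(u⊗u S(u⊗u)). -/
/-!
STATEMENT 14: In a quasitriangular Hopf algebra `(U,R)`, the Drinfeld element
`u = m(S⊗id)(R₂₁)` satisfies `ε(u) = 1` and
`Δ(u) = (R₂₁R)⁻¹(u⊗u) = (u⊗u)(R₂₁R)⁻¹`, and consequently
`Δ(uS(u)) = (R₂₁R)⁻²·(u⊗u)·S(u⊗u)` (with `S` acting on `U⊗U` as `S⊗S`).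
Here `(R₂₁R)⁻¹ = R⁻¹R₂₁⁻¹`. -/

open TensorProduct

/-- Bilinear "multiply images" map: `x ⊗ y ↦ f x * g y`. -/
private noncomputable def mulLin {R A X Y : Type*} [CommRing R] [Ring A] [Algebra R A]
    [AddCommGroup X] [Module R X] [AddCommGroup Y] [Module R Y]
    (f : X →ₗ[R] A) (g : Y →ₗ[R] A) : X ⊗[R] Y →ₗ[R] A :=
  TensorProduct.lift (LinearMap.mk₂ R (fun x y => f x * g y)
    (by intro x x' y; simp [add_mul])
    (by intro c x y; simp [smul_mul_assoc])
    (by intro x y y'; simp [mul_add])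
    (by intro c x y; simp [mul_smul_comm]))

@[simp] private lemma mulLin_tmul {R A X Y : Type*} [CommRing R] [Ring A] [Algebra R A]
    [AddCommGroup X] [Module R X] [AddCommGroup Y] [Module R Y]
    (f : X →ₗ[R] A) (g : Y →ₗ[R] A) (x : X) (y : Y) :
    mulLin f g (x ⊗ₜ[R] y) = f x * g y := rfl

set_option maxHeartbeats 4000000 in
theorem stmt14 (R H : Type*) [CommRing R] [Ring H] [Algebra R H]
    (comul : H →ₐ[R] H ⊗[R] H)
    (counit : H →ₐ[R] R)
    (S : H →ₗ[R] H)
    (hS_antimul : ∀ x y : H, S (x * y) = S y * S x)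
    (hS_one : S 1 = 1)
    (coassoc : ∀ x : H,
      (Algebra.TensorProduct.assoc R R R H H H)
          ((Algebra.TensorProduct.map comul (AlgHom.id R H)) (comul x)) =
        (Algebra.TensorProduct.map (AlgHom.id R H) comul) (comul x))
    (counit_left : ∀ x : H,
      (TensorProduct.lid R H) ((Algebra.TensorProduct.map counit (AlgHom.id R H)) (comul x)) = x)
    (counit_right : ∀ x : H,
      (TensorProduct.rid R H) ((Algebra.TensorProduct.map (AlgHom.id R H) counit) (comul x)) = x)
    (antipode_left : ∀ x : H,
      LinearMap.mul' R H ((S.rTensor H) (comul x)) = algebraMap R H (counit x))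
    (antipode_right : ∀ x : H,
      LinearMap.mul' R H ((S.lTensor H) (comul x)) = algebraMap R H (counit x))
    (Rm Rminv : H ⊗[R] H)
    (hRm_inv : Rm * Rminv = 1 ∧ Rminv * Rm = 1)
    (hRm_intertwine : ∀ x : H,
      Rm * comul x = (Algebra.TensorProduct.comm R H H) (comul x) * Rm)
    (hRm_hex1 :
      (Algebra.TensorProduct.assoc R R R H H H)
          ((Algebra.TensorProduct.map comul (AlgHom.id R H)) Rm) =
        (Algebra.TensorProduct.map (AlgHom.id R H)
          (Algebra.TensorProduct.includeRight : H →ₐ[R] H ⊗[R] H)) Rm *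
        (Algebra.TensorProduct.includeRight : H ⊗[R] H →ₐ[R] H ⊗[R] (H ⊗[R] H)) Rm)
    (hRm_hex2 :
      (Algebra.TensorProduct.map (AlgHom.id R H) comul) Rm =
        (Algebra.TensorProduct.map (AlgHom.id R H)
          (Algebra.TensorProduct.includeRight : H →ₐ[R] H ⊗[R] H)) Rm *
        (Algebra.TensorProduct.map (AlgHom.id R H)
          (Algebra.TensorProduct.includeLeft : H →ₐ[R] H ⊗[R] H)) Rm)
 :
    let u : H := LinearMap.mul' R H ((S.rTensor H) ((Algebra.TensorProduct.comm R H H) Rm))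
    let RRinv : H ⊗[R] H := Rminv * (Algebra.TensorProduct.comm R H H) Rminv
    counit u = 1 ∧
    comul u = RRinv * (u ⊗ₜ u) ∧
    comul u = (u ⊗ₜ u) * RRinv ∧
    comul (u * S u) =
      (RRinv * RRinv) * ((u ⊗ₜ u) * (TensorProduct.map S S) (u ⊗ₜ u)) := by
  intro u RRinv
  classical
  obtain ⟨hinv1, hinv2⟩ := hRm_inv
  obtain ⟨s, hs⟩ := TensorProduct.exists_finset Rm
  have hu : u = ∑ p ∈ s, S p.2 * p.1 := by
    show LinearMap.mul' R H ((S.rTensor H) ((Algebra.TensorProduct.comm R H H) Rm)) = _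
    rw [hs]; simp [map_sum]
  have hRR : RRinv = Rminv * (Algebra.TensorProduct.comm R H H) Rminv := rfl
  clear_value u RRinv
  -- counit/antipode axioms in representation form
  have repCL : ∀ (x : H) (t : Finset (H × H)), comul x = ∑ k ∈ t, k.1 ⊗ₜ[R] k.2 →
      ∑ k ∈ t, counit k.1 • k.2 = x := by
    intro x t ht
    have h := counit_left x
    rw [ht] at h
    simpa [map_sum] using h
  have repCR : ∀ (x : H) (t : Finset (H × H)), comul x = ∑ k ∈ t, k.1 ⊗ₜ[R] k.2 →
      ∑ k ∈ t, counit k.2 • k.1 = x := by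
    intro x t ht
    have h := counit_right x
    rw [ht] at h
    simpa [map_sum] using h
  have repAL : ∀ (x : H) (t : Finset (H × H)), comul x = ∑ k ∈ t, k.1 ⊗ₜ[R] k.2 →
      ∑ k ∈ t, S k.1 * k.2 = algebraMap R H (counit x) := by
    intro x t ht
    have h := antipode_left x
    rw [ht] at h
    simpa [map_sum] using h
  have repAR : ∀ (x : H) (t : Finset (H × H)), comul x = ∑ k ∈ t, k.1 ⊗ₜ[R] k.2 →
      ∑ k ∈ t, k.1 * S k.2 = algebraMap R H (counit x) := by
    intro x t ht
    have h := antipode_right x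
    rw [ht] at h
    simpa [map_sum] using h
  have coassocRep : ∀ (x : H) (t : Finset (H × H)), comul x = ∑ k ∈ t, k.1 ⊗ₜ[R] k.2 →
      (Algebra.TensorProduct.assoc R R R H H H) (∑ k ∈ t, comul k.1 ⊗ₜ[R] k.2)
        = ∑ k ∈ t, k.1 ⊗ₜ[R] comul k.2 := by
    intro x t ht
    have h := coassoc x
    rw [ht] at h
    simpa [map_sum] using h
  -- hexagon 1, restated
  have eq1 : (∑ p ∈ s, comul p.1 ⊗ₜ[R] p.2)
      = ∑ p ∈ s, ∑ q ∈ s, (p.1 ⊗ₜ[R] q.1) ⊗ₜ[R] (p.2 * q.2) := by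
    apply (Algebra.TensorProduct.assoc R R R H H H).injective
    simp only [map_sum]
    have h := hRm_hex1
    rw [hs] at h
    simp only [map_sum, Algebra.TensorProduct.map_tmul, AlgHom.coe_id, id_eq] at h
    rw [h]
    simp [Finset.sum_mul_sum, map_sum, Algebra.TensorProduct.tmul_mul_tmul,
      Algebra.TensorProduct.assoc_tmul]
  -- hexagon 2, restated
  have eq2 : (∑ p ∈ s, p.1 ⊗ₜ[R] comul p.2)
      = ∑ p ∈ s, ∑ q ∈ s, (p.1 * q.1) ⊗ₜ[R] (q.2 ⊗ₜ[R] p.2) := by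
    have h := hRm_hex2
    rw [hs] at h
    simp only [map_sum, Algebra.TensorProduct.map_tmul, AlgHom.coe_id, id_eq,
      Algebra.TensorProduct.includeRight_apply, Algebra.TensorProduct.includeLeft_apply] at h
    rw [h]
    simp [Finset.sum_mul_sum, Algebra.TensorProduct.tmul_mul_tmul]
  -- (ε ⊗ id) R = 1  and  (id ⊗ ε) R = 1
  have L1 : ∑ p ∈ s, counit p.1 • p.2 = 1 := by
    set f1 : H ⊗[R] H →ₗ[R] H :=
      (TensorProduct.lid R H).toLinearMap ∘ₗ
        (Algebra.TensorProduct.map counit (AlgHom.id R H)).toLinearMap with hf1def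
    have hf1 : ∀ (x y : H), f1 (x ⊗ₜ[R] y) = counit x • y := by
      intro x y; simp [hf1def]
    have hf1c : ∀ x : H, f1 (comul x) = x := by
      intro x
      simp only [hf1def, LinearMap.coe_comp, Function.comp_apply, AlgHom.toLinearMap_apply,
        LinearEquiv.coe_coe]
      exact counit_left x
    have hA := congrArg (LinearMap.rTensor H f1) eq1
    simp only [map_sum, LinearMap.rTensor_tmul] at hA
    have hA1 : (∑ p ∈ s, f1 (comul p.1) ⊗ₜ[R] p.2) = Rm := by
      rw [hs]
      exact Finset.sum_congr rfl (fun p _ => by rw [hf1c])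
    have hA2 : (∑ p ∈ s, ∑ q ∈ s, f1 (p.1 ⊗ₜ[R] q.1) ⊗ₜ[R] (p.2 * q.2))
        = ((1:H) ⊗ₜ[R] (∑ p ∈ s, counit p.1 • p.2)) * Rm := by
      calc (∑ p ∈ s, ∑ q ∈ s, f1 (p.1 ⊗ₜ[R] q.1) ⊗ₜ[R] (p.2 * q.2))
          = ∑ q ∈ s, ∑ p ∈ s, counit p.1 • (q.1 ⊗ₜ[R] (p.2 * q.2)) := by
            rw [Finset.sum_comm]
            exact Finset.sum_congr rfl fun q _ => Finset.sum_congr rfl fun p _ => by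
              rw [hf1, TensorProduct.smul_tmul']
        _ = ((1:H) ⊗ₜ[R] (∑ p ∈ s, counit p.1 • p.2)) * Rm := by
            rw [hs, Finset.mul_sum]
            refine Finset.sum_congr rfl fun q _ => ?_
            rw [Algebra.TensorProduct.tmul_mul_tmul, one_mul, Finset.sum_mul,
              TensorProduct.tmul_sum]
            exact Finset.sum_congr rfl fun p _ => by
              rw [smul_mul_assoc, TensorProduct.tmul_smul]
    rw [hA1, hA2] at hA
    have h1c : (1:H) ⊗ₜ[R] (∑ p ∈ s, counit p.1 • p.2) = 1 := by
      have h4 := congrArg (· * Rminv) hA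
      rw [hinv1, mul_assoc, hinv1, mul_one] at h4
      exact h4.symm
    have h5 := congrArg f1 h1c
    rw [hf1, Algebra.TensorProduct.one_def, hf1, map_one, one_smul, one_smul] at h5
    exact h5
  have L1' : ∑ p ∈ s, counit p.2 • p.1 = 1 := by
    set f2 : H ⊗[R] H →ₗ[R] H :=
      (TensorProduct.rid R H).toLinearMap ∘ₗ
        (Algebra.TensorProduct.map (AlgHom.id R H) counit).toLinearMap with hf2def
    have hf2 : ∀ (x y : H), f2 (x ⊗ₜ[R] y) = counit y • x := by
      intro x y; simp [hf2def]
    have hf2c : ∀ x : H, f2 (comul x) = x := by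
      intro x
      simp only [hf2def, LinearMap.coe_comp, Function.comp_apply, AlgHom.toLinearMap_apply,
        LinearEquiv.coe_coe]
      exact counit_right x
    have hA := congrArg (LinearMap.lTensor H f2) eq2
    simp only [map_sum, LinearMap.lTensor_tmul] at hA
    have hA1 : (∑ p ∈ s, p.1 ⊗ₜ[R] f2 (comul p.2)) = Rm := by
      rw [hs]
      exact Finset.sum_congr rfl (fun p _ => by rw [hf2c])
    have hA2 : (∑ p ∈ s, ∑ q ∈ s, (p.1 * q.1) ⊗ₜ[R] f2 (q.2 ⊗ₜ[R] p.2))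
        = ((∑ p ∈ s, counit p.2 • p.1) ⊗ₜ[R] (1:H)) * Rm := by
      calc (∑ p ∈ s, ∑ q ∈ s, (p.1 * q.1) ⊗ₜ[R] f2 (q.2 ⊗ₜ[R] p.2))
          = ∑ q ∈ s, ∑ p ∈ s, counit p.2 • ((p.1 * q.1) ⊗ₜ[R] q.2) := by
            rw [Finset.sum_comm]
            exact Finset.sum_congr rfl fun q _ => Finset.sum_congr rfl fun p _ => by
              rw [hf2, TensorProduct.tmul_smul]
        _ = ((∑ p ∈ s, counit p.2 • p.1) ⊗ₜ[R] (1:H)) * Rm := by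
            rw [hs, Finset.mul_sum]
            refine Finset.sum_congr rfl fun q _ => ?_
            rw [Algebra.TensorProduct.tmul_mul_tmul, one_mul, Finset.sum_mul,
              TensorProduct.sum_tmul]
            exact Finset.sum_congr rfl fun p _ => by
              rw [smul_mul_assoc, TensorProduct.smul_tmul']
    rw [hA1, hA2] at hA
    have h1c : (∑ p ∈ s, counit p.2 • p.1) ⊗ₜ[R] (1:H) = 1 := by
      have h4 := congrArg (· * Rminv) hA
      rw [hinv1, mul_assoc, hinv1, mul_one] at h4
      exact h4.symm
    have h5 := congrArg f2 h1c
    rw [hf2, Algebra.TensorProduct.one_def, hf2, map_one, one_smul, one_smul] at h5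
    exact h5
  -- counit u = 1
  have Gcounit : counit u = 1 := by
    have h := congrArg (counit.toLinearMap ∘ₗ S) L1
    simp only [map_sum, LinearMap.coe_comp, Function.comp_apply, AlgHom.toLinearMap_apply,
      map_smul, hS_one, map_one] at h
    rw [hu, map_sum]
    rw [← h]
    exact Finset.sum_congr rfl fun p _ => by
      rw [map_mul, smul_eq_mul, mul_comm]
  -- (S ⊗ id) R = R⁻¹
  set g : H ⊗[R] H →ₗ[R] H := LinearMap.mul' R H ∘ₗ S.rTensor H with hgdef
  have hg : ∀ (x y : H), g (x ⊗ₜ[R] y) = S x * y := by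
    intro x y; simp [hgdef]
  have hgc : ∀ x : H, g (comul x) = algebraMap R H (counit x) := by
    intro x
    simp only [hgdef, LinearMap.coe_comp, Function.comp_apply]
    exact antipode_left x
  have L3 : Rminv = ∑ p ∈ s, S p.1 ⊗ₜ[R] p.2 := by
    have hB := congrArg (LinearMap.rTensor H g) eq1
    simp only [map_sum, LinearMap.rTensor_tmul] at hB
    have hB1 : (∑ p ∈ s, g (comul p.1) ⊗ₜ[R] p.2) = 1 := by
      calc (∑ p ∈ s, g (comul p.1) ⊗ₜ[R] p.2)
          = ∑ p ∈ s, counit p.1 • ((1:H) ⊗ₜ[R] p.2) := by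
            exact Finset.sum_congr rfl fun p _ => by
              rw [hgc, Algebra.algebraMap_eq_smul_one, TensorProduct.smul_tmul']
        _ = (1:H) ⊗ₜ[R] (∑ p ∈ s, counit p.1 • p.2) := by
            rw [TensorProduct.tmul_sum]
            exact Finset.sum_congr rfl fun p _ => by rw [TensorProduct.tmul_smul]
        _ = 1 := by rw [L1, Algebra.TensorProduct.one_def]
    have hB2 : (∑ p ∈ s, ∑ q ∈ s, g (p.1 ⊗ₜ[R] q.1) ⊗ₜ[R] (p.2 * q.2))
        = (∑ p ∈ s, S p.1 ⊗ₜ[R] p.2) * Rm := by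
      rw [hs, Finset.sum_mul_sum]
      exact Finset.sum_congr rfl fun p _ => Finset.sum_congr rfl fun q _ => by
        rw [hg, Algebra.TensorProduct.tmul_mul_tmul]
    rw [hB1, hB2] at hB
    calc Rminv = (∑ p ∈ s, S p.1 ⊗ₜ[R] p.2) * Rm * Rminv := by
          rw [← hB, one_mul]
      _ = ∑ p ∈ s, S p.1 ⊗ₜ[R] p.2 := by rw [mul_assoc, hinv1, mul_one]
  -- hexagon for R⁻¹
  have hexInv : (∑ p ∈ s, S p.1 ⊗ₜ[R] comul p.2)
      = ∑ p ∈ s, ∑ q ∈ s, (S p.1 * S q.1) ⊗ₜ[R] (p.2 ⊗ₜ[R] q.2) := by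
    have hMM' : (Algebra.TensorProduct.map (AlgHom.id R H) comul) Rm *
        (Algebra.TensorProduct.map (AlgHom.id R H) comul) Rminv = 1 := by
      rw [← map_mul, hinv1, map_one]
    have hABM : ((Algebra.TensorProduct.map (AlgHom.id R H)
          (Algebra.TensorProduct.includeLeft : H →ₐ[R] H ⊗[R] H)) Rminv *
        (Algebra.TensorProduct.map (AlgHom.id R H)
          (Algebra.TensorProduct.includeRight : H →ₐ[R] H ⊗[R] H)) Rminv) *
        (Algebra.TensorProduct.map (AlgHom.id R H) comul) Rm = 1 := by
      rw [hRm_hex2, mul_assoc, ← mul_assoc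
        ((Algebra.TensorProduct.map (AlgHom.id R H)
          (Algebra.TensorProduct.includeRight : H →ₐ[R] H ⊗[R] H)) Rminv)]
      rw [← map_mul, hinv2, map_one, one_mul, ← map_mul, hinv2, map_one]
    have hM' : (Algebra.TensorProduct.map (AlgHom.id R H) comul) Rminv
        = (Algebra.TensorProduct.map (AlgHom.id R H)
            (Algebra.TensorProduct.includeLeft : H →ₐ[R] H ⊗[R] H)) Rminv *
          (Algebra.TensorProduct.map (AlgHom.id R H)
            (Algebra.TensorProduct.includeRight : H →ₐ[R] H ⊗[R] H)) Rminv := by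
      calc (Algebra.TensorProduct.map (AlgHom.id R H) comul) Rminv
          = (((Algebra.TensorProduct.map (AlgHom.id R H)
                (Algebra.TensorProduct.includeLeft : H →ₐ[R] H ⊗[R] H)) Rminv *
              (Algebra.TensorProduct.map (AlgHom.id R H)
                (Algebra.TensorProduct.includeRight : H →ₐ[R] H ⊗[R] H)) Rminv) *
              (Algebra.TensorProduct.map (AlgHom.id R H) comul) Rm) *
            (Algebra.TensorProduct.map (AlgHom.id R H) comul) Rminv := by
            rw [hABM, one_mul]
        _ = _ := by rw [mul_assoc, hMM', mul_one]
    rw [L3] at hM'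
    simp only [map_sum, Algebra.TensorProduct.map_tmul, AlgHom.coe_id, id_eq,
      Algebra.TensorProduct.includeLeft_apply, Algebra.TensorProduct.includeRight_apply] at hM'
    rw [hM', Finset.sum_mul_sum]
    exact Finset.sum_congr rfl fun p _ => Finset.sum_congr rfl fun q _ => by
      rw [Algebra.TensorProduct.tmul_mul_tmul, Algebra.TensorProduct.tmul_mul_tmul,
        one_mul, mul_one]
  -- (S ⊗ S) R = R
  have L4 : (∑ p ∈ s, S p.1 ⊗ₜ[R] S p.2) = Rm := by
    have hC := congrArg (LinearMap.lTensor H g) hexInv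
    simp only [map_sum, LinearMap.lTensor_tmul] at hC
    have hC1 : (∑ p ∈ s, S p.1 ⊗ₜ[R] g (comul p.2)) = 1 := by
      calc (∑ p ∈ s, S p.1 ⊗ₜ[R] g (comul p.2))
          = ∑ p ∈ s, counit p.2 • (S p.1 ⊗ₜ[R] (1:H)) := by
            exact Finset.sum_congr rfl fun p _ => by
              rw [hgc, Algebra.algebraMap_eq_smul_one, TensorProduct.tmul_smul]
        _ = (∑ p ∈ s, counit p.2 • S p.1) ⊗ₜ[R] (1:H) := by
            rw [TensorProduct.sum_tmul]
            exact Finset.sum_congr rfl fun p _ => by rw [TensorProduct.smul_tmul']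
        _ = 1 := by
            have hx : ∑ p ∈ s, counit p.2 • S p.1 = S (∑ p ∈ s, counit p.2 • p.1) := by
              rw [map_sum]
              exact Finset.sum_congr rfl fun p _ => (map_smul S _ _).symm
            rw [hx, L1', hS_one, Algebra.TensorProduct.one_def]
    have hC2 : (∑ p ∈ s, ∑ q ∈ s, (S p.1 * S q.1) ⊗ₜ[R] g (p.2 ⊗ₜ[R] q.2))
        = (∑ p ∈ s, S p.1 ⊗ₜ[R] S p.2) * Rminv := by
      rw [L3, Finset.sum_mul_sum]
      exact Finset.sum_congr rfl fun p _ => Finset.sum_congr rfl fun q _ => by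
        rw [hg, Algebra.TensorProduct.tmul_mul_tmul]
    rw [hC1, hC2] at hC
    calc (∑ p ∈ s, S p.1 ⊗ₜ[R] S p.2)
        = (∑ p ∈ s, S p.1 ⊗ₜ[R] S p.2) * (Rminv * Rm) := by rw [hinv2, mul_one]
      _ = (∑ p ∈ s, S p.1 ⊗ₜ[R] S p.2) * Rminv * Rm := by rw [mul_assoc]
      _ = Rm := by rw [← hC, one_mul]
  -- S²⊗S applied to R is R⁻¹, and friends
  have L5 : (∑ p ∈ s, S (S p.1) ⊗ₜ[R] S p.2) = Rminv := by
    have h := congrArg (LinearMap.rTensor H S) L4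
    simp only [map_sum, LinearMap.rTensor_tmul] at h
    rw [h, hs, map_sum]
    simp only [LinearMap.rTensor_tmul]
    exact L3.symm
  have mSSRminv : (TensorProduct.map S S) Rminv = Rminv := by
    conv_lhs => rw [L3]
    rw [map_sum]
    simp only [TensorProduct.map_tmul]
    exact L5
  have L5' : (∑ p ∈ s, S (S (S p.1)) ⊗ₜ[R] S (S p.2)) = Rminv := by
    have h := congrArg (TensorProduct.map S S) L5
    simp only [map_sum, TensorProduct.map_tmul] at h
    rw [h, mSSRminv]
  have L6 : (∑ p ∈ s, S p.2 ⊗ₜ[R] S (S p.1)) = (Algebra.TensorProduct.comm R H H) Rminv := by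
    have h := congrArg (Algebra.TensorProduct.comm R H H) L5
    simp only [map_sum, Algebra.TensorProduct.comm_tmul] at h
    exact h
  have L6' : (∑ p ∈ s, S (S p.2) ⊗ₜ[R] S (S (S p.1)))
      = (Algebra.TensorProduct.comm R H H) Rminv := by
    have h := congrArg (Algebra.TensorProduct.comm R H H) L5'
    simp only [map_sum, Algebra.TensorProduct.comm_tmul] at h
    exact h
  -- helpers
  have sigsig : ∀ X : H ⊗[R] H,
      (Algebra.TensorProduct.comm R H H) ((Algebra.TensorProduct.comm R H H) X) = X := by
    intro X
    induction X using TensorProduct.induction_on with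
    | zero => simp
    | tmul p q => simp [Algebra.TensorProduct.comm_tmul]
    | add x y hx hy => simp [hx, hy]
  -- the fundamental identity  ∑ S(h₂) u h₁ = ε(h) u
  have Lstar : ∀ h : H,
      (mulLin S (LinearMap.mulLeft R u)) ((TensorProduct.comm R H H) (comul h))
        = counit h • u := by
    intro h
    obtain ⟨t, ht⟩ := TensorProduct.exists_finset (comul h)
    have hI := hRm_intertwine h
    rw [hs, ht] at hI
    simp only [map_sum, Algebra.TensorProduct.comm_tmul, Finset.sum_mul_sum,
      Algebra.TensorProduct.tmul_mul_tmul] at hI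
    -- apply x⊗y ↦ S y * x to both sides
    have hphi := congrArg (LinearMap.mul' R H ∘ₗ (S.rTensor H) ∘ₗ
      (TensorProduct.comm R H H).toLinearMap) hI
    simp only [map_sum, LinearMap.coe_comp, Function.comp_apply, LinearEquiv.coe_coe,
      TensorProduct.comm_tmul, LinearMap.rTensor_tmul, LinearMap.mul'_apply] at hphi
    have key1 : (∑ p ∈ s, ∑ k ∈ t, S (p.2 * k.2) * (p.1 * k.1))
        = ∑ k ∈ t, S k.2 * (u * k.1) := by
      rw [Finset.sum_comm]
      refine Finset.sum_congr rfl fun k _ => ?_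
      rw [hu, Finset.sum_mul, Finset.mul_sum]
      refine Finset.sum_congr rfl fun p _ => ?_
      rw [hS_antimul]
      simp only [mul_assoc]
    have key2 : (∑ k ∈ t, ∑ p ∈ s, S (k.1 * p.2) * (k.2 * p.1)) = counit h • u := by
      rw [Finset.sum_comm]
      have step : ∀ p ∈ s, (∑ k ∈ t, S (k.1 * p.2) * (k.2 * p.1))
          = counit h • (S p.2 * p.1) := by
        intro p _
        have e1 : ∀ k ∈ t, S (k.1 * p.2) * (k.2 * p.1) = S p.2 * ((S k.1 * k.2) * p.1) := by
          intro k _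
          rw [hS_antimul]
          simp only [mul_assoc]
        rw [Finset.sum_congr rfl e1, ← Finset.mul_sum, ← Finset.sum_mul, repAL h t ht,
          ← Algebra.smul_def, mul_smul_comm]
      rw [Finset.sum_congr rfl step, ← Finset.smul_sum, ← hu]
    rw [ht]
    simp only [map_sum, TensorProduct.comm_tmul, mulLin_tmul,
      LinearMap.mulLeft_apply]
    rw [← key1, hphi, key2]
  -- u h = S²(h) u
  have hK : ∀ h : H, u * h = S (S h) * u := by
    intro h
    obtain ⟨t, ht⟩ := TensorProduct.exists_finset (comul h)
    set ν : H ⊗[R] H →ₗ[R] H := S ∘ₗ LinearMap.mul' R H ∘ₗ S.lTensor H with hνdef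
    have hν : ∀ (x y : H), ν (x ⊗ₜ[R] y) = S (x * S y) := by
      intro x y; simp [hνdef]
    set Φ : H ⊗[R] (H ⊗[R] H) →ₗ[R] H :=
      (mulLin ν (LinearMap.mulLeft R u)) ∘ₗ (TensorProduct.comm R H (H ⊗[R] H)).toLinearMap
      with hΦdef
    have hΦ : ∀ (p : H) (tt : H ⊗[R] H), Φ (p ⊗ₜ[R] tt) = ν tt * (u * p) := by
      intro p tt; simp [hΦdef]
    have way1 : Φ (∑ k ∈ t, k.1 ⊗ₜ[R] comul k.2) = u * h := by
      rw [map_sum]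
      have step : ∀ k ∈ t, Φ (k.1 ⊗ₜ[R] comul k.2) = counit k.2 • (u * k.1) := by
        intro k _
        rw [hΦ]
        have : ν (comul k.2) = counit k.2 • 1 := by
          simp only [hνdef, LinearMap.coe_comp, Function.comp_apply]
          rw [antipode_right k.2, Algebra.algebraMap_eq_smul_one, map_smul, hS_one]
        rw [this, smul_mul_assoc, one_mul]
      rw [Finset.sum_congr rfl step]
      have : ∀ k ∈ t, counit k.2 • (u * k.1) = u * (counit k.2 • k.1) := by
        intro k _; rw [mul_smul_comm]
      rw [Finset.sum_congr rfl this, ← Finset.mul_sum, repCR h t ht]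
    have aux : ∀ (tt : H ⊗[R] H) (r : H),
        Φ ((Algebra.TensorProduct.assoc R R R H H H) (tt ⊗ₜ[R] r))
          = S (S r) * ((mulLin S (LinearMap.mulLeft R u)) ((TensorProduct.comm R H H) tt)) := by
      intro tt r
      induction tt using TensorProduct.induction_on with
      | zero => simp [TensorProduct.zero_tmul]
      | tmul p q =>
          rw [Algebra.TensorProduct.assoc_tmul, hΦ, hν, hS_antimul]
          simp only [TensorProduct.comm_tmul, mulLin_tmul, LinearMap.mulLeft_apply]
          simp only [mul_assoc]
      | add x y hx hy =>
          rw [TensorProduct.add_tmul, map_add, map_add, hx, hy, map_add, map_add, mul_add]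
    have way2 : Φ (∑ k ∈ t, k.1 ⊗ₜ[R] comul k.2) = S (S h) * u := by
      rw [← coassocRep h t ht, map_sum, map_sum]
      have step : ∀ k ∈ t,
          Φ ((Algebra.TensorProduct.assoc R R R H H H) (comul k.1 ⊗ₜ[R] k.2))
            = counit k.1 • (S (S k.2) * u) := by
        intro k _
        rw [aux, Lstar k.1, mul_smul_comm]
      rw [Finset.sum_congr rfl step]
      have : ∀ k ∈ t, counit k.1 • (S (S k.2) * u) = S (S (counit k.1 • k.2)) * u := by
        intro k _; rw [map_smul, map_smul, smul_mul_assoc]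
      rw [Finset.sum_congr rfl this]
      have : ∑ k ∈ t, S (S (counit k.1 • k.2)) * u
          = S (S (∑ k ∈ t, counit k.1 • k.2)) * u := by
        rw [map_sum, map_sum, Finset.sum_mul]
      rw [this, repCL h t ht]
    rw [← way1, way2]
  -- (u⊗u) X = (S²⊗S²) X (u⊗u)
  have F1 : ∀ X : H ⊗[R] H,
      (u ⊗ₜ[R] u) * X = (TensorProduct.map (S ∘ₗ S) (S ∘ₗ S)) X * (u ⊗ₜ[R] u) := by
    intro X
    induction X using TensorProduct.induction_on with
    | zero => simp
    | tmul p q =>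
        rw [TensorProduct.map_tmul, Algebra.TensorProduct.tmul_mul_tmul,
          Algebra.TensorProduct.tmul_mul_tmul, hK p, hK q]
        simp only [LinearMap.coe_comp, Function.comp_apply]
    | add x y hx hy => rw [mul_add, map_add, add_mul, hx, hy]
  have mapcomm : ∀ (f f' : H →ₗ[R] H) (X : H ⊗[R] H),
      (TensorProduct.map f f') ((Algebra.TensorProduct.comm R H H) X)
        = (Algebra.TensorProduct.comm R H H) ((TensorProduct.map f' f) X) := by
    intro f f' X
    induction X using TensorProduct.induction_on with
    | zero => simp
    | tmul p q => simp [Algebra.TensorProduct.comm_tmul]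
    | add x y hx hy => simp [hx, hy]
  -- S⊗S is antimultiplicative
  have AM : ∀ X Y : H ⊗[R] H, (TensorProduct.map S S) (X * Y)
      = (TensorProduct.map S S) Y * (TensorProduct.map S S) X := by
    intro X Y
    induction X using TensorProduct.induction_on with
    | zero => simp
    | tmul p q =>
        induction Y using TensorProduct.induction_on with
        | zero => simp
        | tmul p' q' =>
            rw [Algebra.TensorProduct.tmul_mul_tmul, TensorProduct.map_tmul,
              TensorProduct.map_tmul, TensorProduct.map_tmul,
              Algebra.TensorProduct.tmul_mul_tmul, hS_antimul, hS_antimul]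
        | add x y hx hy => rw [mul_add, map_add, hx, hy, map_add, add_mul]
    | add x y hx hy => rw [add_mul, map_add, hx, hy, map_add, mul_add]
  -- S²⊗S² is multiplicative
  have mS2mul : ∀ X Y : H ⊗[R] H, (TensorProduct.map (S ∘ₗ S) (S ∘ₗ S)) (X * Y)
      = (TensorProduct.map (S ∘ₗ S) (S ∘ₗ S)) X * (TensorProduct.map (S ∘ₗ S) (S ∘ₗ S)) Y := by
    intro X Y
    induction X using TensorProduct.induction_on with
    | zero => simp
    | tmul p q =>
        induction Y using TensorProduct.induction_on with
        | zero => simp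
        | tmul p' q' =>
            rw [Algebra.TensorProduct.tmul_mul_tmul, TensorProduct.map_tmul,
              TensorProduct.map_tmul, TensorProduct.map_tmul,
              Algebra.TensorProduct.tmul_mul_tmul]
            simp only [LinearMap.coe_comp, Function.comp_apply]
            rw [hS_antimul, hS_antimul, hS_antimul, hS_antimul]
        | add x y hx hy => rw [mul_add, map_add, hx, hy, map_add, mul_add]
    | add x y hx hy => rw [add_mul, map_add, hx, hy, map_add, add_mul]
  have mS2Rminv : (TensorProduct.map (S ∘ₗ S) (S ∘ₗ S)) Rminv = Rminv := by
    conv_lhs => rw [L3]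
    rw [map_sum]
    simp only [TensorProduct.map_tmul, LinearMap.coe_comp, Function.comp_apply]
    exact L5'
  have mS2cRminv : (TensorProduct.map (S ∘ₗ S) (S ∘ₗ S))
      ((Algebra.TensorProduct.comm R H H) Rminv) = (Algebra.TensorProduct.comm R H H) Rminv := by
    rw [mapcomm, mS2Rminv]
  have mSScRminv : (TensorProduct.map S S)
      ((Algebra.TensorProduct.comm R H H) Rminv) = (Algebra.TensorProduct.comm R H H) Rminv := by
    rw [mapcomm, mSSRminv]
  have mS2RRinv : (TensorProduct.map (S ∘ₗ S) (S ∘ₗ S)) RRinv = RRinv := by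
    rw [hRR, mS2mul, mS2Rminv, mS2cRminv]
  -- Δ ∘ S = σ ∘ (S⊗S) ∘ Δ
  set G : H →ₗ[R] H ⊗[R] H :=
    (Algebra.TensorProduct.comm R H H).toLinearMap ∘ₗ
      (TensorProduct.map S S) ∘ₗ comul.toLinearMap with hGdef
  have hG : ∀ x : H, G x = (Algebra.TensorProduct.comm R H H)
      ((TensorProduct.map S S) (comul x)) := by
    intro x; simp [hGdef]; rfl
  have Jlem : ∀ d : H,
      (mulLin (TensorProduct.mk R H H 1) G) (comul d) = S d ⊗ₜ[R] (1:H) := by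
    intro d
    obtain ⟨td, htd⟩ := TensorProduct.exists_finset (comul d)
    set K1 : H ⊗[R] (H ⊗[R] H) →ₗ[R] H ⊗[R] H :=
      mulLin (TensorProduct.mk R H H 1)
        ((Algebra.TensorProduct.comm R H H).toLinearMap ∘ₗ (TensorProduct.map S S))
      with hK1def
    have step0 : (mulLin (TensorProduct.mk R H H 1) G) (comul d)
        = K1 (∑ m ∈ td, m.1 ⊗ₜ[R] comul m.2) := by
      rw [htd, map_sum, map_sum]
      refine Finset.sum_congr rfl fun m _ => ?_
      rw [mulLin_tmul, hK1def, mulLin_tmul, hG]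
      simp only [LinearMap.coe_comp, Function.comp_apply, LinearEquiv.coe_coe,
        AlgEquiv.toLinearMap_apply, AlgEquiv.coe_toLinearEquiv]
    have aux1 : ∀ (tt : H ⊗[R] H) (r : H),
        K1 ((Algebra.TensorProduct.assoc R R R H H H) (tt ⊗ₜ[R] r))
          = S r ⊗ₜ[R] (LinearMap.mul' R H ((S.lTensor H) tt)) := by
      intro tt r
      induction tt using TensorProduct.induction_on with
      | zero => simp [TensorProduct.zero_tmul]
      | tmul p q =>
          rw [Algebra.TensorProduct.assoc_tmul, hK1def, mulLin_tmul]
          simp only [TensorProduct.mk_apply, LinearMap.coe_comp, Function.comp_apply,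
            TensorProduct.map_tmul, AlgEquiv.toLinearMap_apply,
            Algebra.TensorProduct.comm_tmul, LinearMap.lTensor_tmul, LinearMap.mul'_apply]
          rw [Algebra.TensorProduct.tmul_mul_tmul, one_mul]
      | add x y hx hy =>
          rw [TensorProduct.add_tmul, map_add, map_add, hx, hy, map_add, map_add,
            TensorProduct.tmul_add]
    have step1 : K1 (∑ m ∈ td, m.1 ⊗ₜ[R] comul m.2)
        = ∑ m ∈ td, S m.2 ⊗ₜ[R] (LinearMap.mul' R H ((S.lTensor H) (comul m.1))) := by
      rw [← coassocRep d td htd, map_sum, map_sum]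
      exact Finset.sum_congr rfl fun m _ => aux1 (comul m.1) m.2
    rw [step0, step1]
    calc (∑ m ∈ td, S m.2 ⊗ₜ[R] (LinearMap.mul' R H ((S.lTensor H) (comul m.1))))
        = ∑ m ∈ td, counit m.1 • (S m.2 ⊗ₜ[R] (1:H)) := by
          refine Finset.sum_congr rfl fun m _ => ?_
          rw [antipode_right m.1, Algebra.algebraMap_eq_smul_one, TensorProduct.tmul_smul]
      _ = (∑ m ∈ td, counit m.1 • S m.2) ⊗ₜ[R] (1:H) := by
          rw [TensorProduct.sum_tmul]
          exact Finset.sum_congr rfl fun m _ => by rw [TensorProduct.smul_tmul']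
      _ = S d ⊗ₜ[R] (1:H) := by
          have : ∑ m ∈ td, counit m.1 • S m.2 = S (∑ m ∈ td, counit m.1 • m.2) := by
            rw [map_sum]
            exact Finset.sum_congr rfl fun m _ => (map_smul S _ _).symm
          rw [this, repCL d td htd]
  have betalem : ∀ x : H,
      (mulLin comul.toLinearMap G) (comul x) = counit x • 1 := by
    intro x
    obtain ⟨t, ht⟩ := TensorProduct.exists_finset (comul x)
    set Om : (H ⊗[R] H) ⊗[R] H →ₗ[R] H ⊗[R] H := mulLin LinearMap.id G with hOmdef
    have aux2 : ∀ (c : H) (tt : H ⊗[R] H),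
        Om ((Algebra.TensorProduct.assoc R R R H H H).symm (c ⊗ₜ[R] tt))
          = (c ⊗ₜ[R] (1:H)) * (mulLin (TensorProduct.mk R H H 1) G) tt := by
      intro c tt
      induction tt using TensorProduct.induction_on with
      | zero => simp [TensorProduct.tmul_zero]
      | tmul q r =>
          have hsymm : (Algebra.TensorProduct.assoc R R R H H H).symm (c ⊗ₜ[R] (q ⊗ₜ[R] r))
              = (c ⊗ₜ[R] q) ⊗ₜ[R] r := by
            rw [← Algebra.TensorProduct.assoc_tmul (T := R), AlgEquiv.symm_apply_apply]
          rw [hsymm, hOmdef, mulLin_tmul, mulLin_tmul, LinearMap.id_apply,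
            TensorProduct.mk_apply, ← mul_assoc, Algebra.TensorProduct.tmul_mul_tmul,
            one_mul, mul_one]
      | add x' y hx hy =>
          rw [TensorProduct.tmul_add, map_add, map_add, hx, hy, map_add, mul_add]
    have expand : (mulLin comul.toLinearMap G) (comul x)
        = Om ((Algebra.TensorProduct.assoc R R R H H H).symm (∑ k ∈ t, k.1 ⊗ₜ[R] comul k.2)) := by
      have hsymm2 : (Algebra.TensorProduct.assoc R R R H H H).symm (∑ k ∈ t, k.1 ⊗ₜ[R] comul k.2)
          = ∑ k ∈ t, comul k.1 ⊗ₜ[R] k.2 := by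
        rw [← coassocRep x t ht, AlgEquiv.symm_apply_apply]
      rw [hsymm2, ht, map_sum, map_sum]
      refine Finset.sum_congr rfl fun k _ => ?_
      rw [mulLin_tmul, hOmdef, mulLin_tmul, LinearMap.id_apply]
      simp only [AlgHom.toLinearMap_apply]
    rw [expand, map_sum, map_sum]
    calc (∑ k ∈ t, Om ((Algebra.TensorProduct.assoc R R R H H H).symm (k.1 ⊗ₜ[R] comul k.2)))
        = ∑ k ∈ t, (k.1 * S k.2) ⊗ₜ[R] (1:H) := by
          refine Finset.sum_congr rfl fun k _ => ?_
          rw [aux2, Jlem, Algebra.TensorProduct.tmul_mul_tmul, one_mul]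
      _ = counit x • 1 := by
          rw [← TensorProduct.sum_tmul, repAR x t ht]
          rw [Algebra.TensorProduct.one_def]
          rw [Algebra.algebraMap_eq_smul_one]
          rw [TensorProduct.smul_tmul']
  have L10 : ∀ x : H, comul (S x) = (Algebra.TensorProduct.comm R H H)
      ((TensorProduct.map S S) (comul x)) := by
    intro x
    obtain ⟨t, ht⟩ := TensorProduct.exists_finset (comul x)
    set Xi : H ⊗[R] (H ⊗[R] H) →ₗ[R] H ⊗[R] H :=
      mulLin (comul.toLinearMap ∘ₗ S) (mulLin comul.toLinearMap G) with hXidef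
    have way1 : Xi (∑ k ∈ t, k.1 ⊗ₜ[R] comul k.2) = comul (S x) := by
      rw [map_sum]
      calc (∑ k ∈ t, Xi (k.1 ⊗ₜ[R] comul k.2))
          = ∑ k ∈ t, counit k.2 • comul (S k.1) := by
            refine Finset.sum_congr rfl fun k _ => ?_
            rw [hXidef, mulLin_tmul, betalem k.2, mul_smul_comm, mul_one]
            simp only [LinearMap.coe_comp, Function.comp_apply, AlgHom.toLinearMap_apply]
        _ = comul (S (∑ k ∈ t, counit k.2 • k.1)) := by
            rw [map_sum, map_sum]
            refine Finset.sum_congr rfl fun k _ => ?_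
            rw [map_smul, map_smul]
        _ = comul (S x) := by rw [repCR x t ht]
    have aux3 : ∀ (tt : H ⊗[R] H) (r : H),
        Xi ((Algebra.TensorProduct.assoc R R R H H H) (tt ⊗ₜ[R] r))
          = comul (LinearMap.mul' R H ((S.rTensor H) tt)) * G r := by
      intro tt r
      induction tt using TensorProduct.induction_on with
      | zero => simp [TensorProduct.zero_tmul]
      | tmul p q =>
          rw [Algebra.TensorProduct.assoc_tmul, hXidef, mulLin_tmul, mulLin_tmul]
          simp only [LinearMap.coe_comp, Function.comp_apply, AlgHom.toLinearMap_apply,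
            LinearMap.rTensor_tmul, LinearMap.mul'_apply]
          rw [map_mul, mul_assoc]
      | add x' y hx hy =>
          rw [TensorProduct.add_tmul, map_add, map_add, hx, hy, map_add, map_add, map_add,
            add_mul]
    have way2 : Xi (∑ k ∈ t, k.1 ⊗ₜ[R] comul k.2) = G x := by
      rw [← coassocRep x t ht, map_sum, map_sum]
      calc (∑ k ∈ t, Xi ((Algebra.TensorProduct.assoc R R R H H H) (comul k.1 ⊗ₜ[R] k.2)))
          = ∑ k ∈ t, counit k.1 • G k.2 := by
            refine Finset.sum_congr rfl fun k _ => ?_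
            rw [aux3, antipode_left k.1, AlgHom.commutes, Algebra.algebraMap_eq_smul_one,
              smul_mul_assoc, one_mul]
        _ = G (∑ k ∈ t, counit k.1 • k.2) := by
            rw [map_sum]
            exact Finset.sum_congr rfl fun k _ => (map_smul G _ _).symm
        _ = G x := by rw [repCL x t ht]
    rw [← way1, way2, hG]
  -- ============ main computation:  Δu = R⁻¹ σ(R⁻¹) (u ⊗ u) ============
  set Psi : (H ⊗[R] H) ⊗[R] (H ⊗[R] H) →ₗ[R] H ⊗[R] H :=
    (mulLin ((Algebra.TensorProduct.comm R H H).toLinearMap ∘ₗ TensorProduct.map S S)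
      LinearMap.id) ∘ₗ (TensorProduct.comm R (H ⊗[R] H) (H ⊗[R] H)).toLinearMap with hPsidef
  have hPsi : ∀ st tt : H ⊗[R] H, Psi (st ⊗ₜ[R] tt)
      = (Algebra.TensorProduct.comm R H H) ((TensorProduct.map S S) tt) * st := by
    intro st tt; simp [hPsidef]; rfl
  have stepA : comul u = Psi (∑ p ∈ s, comul p.1 ⊗ₜ[R] comul p.2) := by
    rw [hu, map_sum, map_sum]
    refine Finset.sum_congr rfl fun p _ => ?_
    rw [map_mul, L10 p.2, hPsi]
  have stepB : (∑ p ∈ s, comul p.1 ⊗ₜ[R] comul p.2)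
      = ∑ p ∈ s, ∑ q ∈ s, (p.1 ⊗ₜ[R] q.1) ⊗ₜ[R] (comul p.2 * comul q.2) := by
    have h := congrArg (Algebra.TensorProduct.map (AlgHom.id R (H ⊗[R] H)) comul) eq1
    simp only [map_sum, Algebra.TensorProduct.map_tmul, AlgHom.coe_id, id_eq, map_mul] at h
    exact h
  have stepC : (∑ p ∈ s, ∑ q ∈ s, (p.1 ⊗ₜ[R] q.1) ⊗ₜ[R] (comul p.2 * comul q.2))
      = (∑ p ∈ s, (p.1 ⊗ₜ[R] (1:H)) ⊗ₜ[R] comul p.2) *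
        (∑ q ∈ s, ((1:H) ⊗ₜ[R] q.1) ⊗ₜ[R] comul q.2) := by
    rw [Finset.sum_mul_sum]
    exact Finset.sum_congr rfl fun p _ => Finset.sum_congr rfl fun q _ => by
      rw [Algebra.TensorProduct.tmul_mul_tmul, Algebra.TensorProduct.tmul_mul_tmul,
        one_mul, mul_one]
  have fac1 : (∑ p ∈ s, (p.1 ⊗ₜ[R] (1:H)) ⊗ₜ[R] comul p.2)
      = ∑ m ∈ s, ∑ n ∈ s, ((m.1 * n.1) ⊗ₜ[R] (1:H)) ⊗ₜ[R] (n.2 ⊗ₜ[R] m.2) := by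
    have h := congrArg (LinearMap.rTensor (H ⊗[R] H) ((TensorProduct.mk R H H).flip 1)) eq2
    simpa only [map_sum, LinearMap.rTensor_tmul, TensorProduct.mk_apply,
      LinearMap.flip_apply] using h
  have fac2 : (∑ q ∈ s, ((1:H) ⊗ₜ[R] q.1) ⊗ₜ[R] comul q.2)
      = ∑ m ∈ s, ∑ n ∈ s, ((1:H) ⊗ₜ[R] (m.1 * n.1)) ⊗ₜ[R] (n.2 ⊗ₜ[R] m.2) := by
    have h := congrArg (LinearMap.rTensor (H ⊗[R] H) (TensorProduct.mk R H H 1)) eq2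
    simpa only [map_sum, LinearMap.rTensor_tmul, TensorProduct.mk_apply] using h
  have stepE : (∑ p ∈ s, ∑ q ∈ s, ((p.1 * q.1) ⊗ₜ[R] (1:H)) ⊗ₜ[R] (q.2 ⊗ₜ[R] p.2)) *
      (∑ m ∈ s, ∑ n ∈ s, ((1:H) ⊗ₜ[R] (m.1 * n.1)) ⊗ₜ[R] (n.2 ⊗ₜ[R] m.2))
      = ∑ p ∈ s, ∑ q ∈ s, ∑ m ∈ s, ∑ n ∈ s,
          ((p.1 * q.1) ⊗ₜ[R] (m.1 * n.1)) ⊗ₜ[R] ((q.2 * n.2) ⊗ₜ[R] (p.2 * m.2)) := by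
    rw [Finset.sum_mul_sum]
    refine Finset.sum_congr rfl fun p _ => ?_
    have inner : ∀ m ∈ s, (∑ q ∈ s, ((p.1 * q.1) ⊗ₜ[R] (1:H)) ⊗ₜ[R] (q.2 ⊗ₜ[R] p.2)) *
        (∑ n ∈ s, ((1:H) ⊗ₜ[R] (m.1 * n.1)) ⊗ₜ[R] (n.2 ⊗ₜ[R] m.2))
        = ∑ q ∈ s, ∑ n ∈ s,
            ((p.1 * q.1) ⊗ₜ[R] (m.1 * n.1)) ⊗ₜ[R] ((q.2 * n.2) ⊗ₜ[R] (p.2 * m.2)) := by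
      intro m _
      rw [Finset.sum_mul_sum]
      exact Finset.sum_congr rfl fun q _ => Finset.sum_congr rfl fun n _ => by
        rw [Algebra.TensorProduct.tmul_mul_tmul, Algebra.TensorProduct.tmul_mul_tmul,
          Algebra.TensorProduct.tmul_mul_tmul, one_mul, mul_one]
    rw [Finset.sum_congr rfl inner, Finset.sum_comm]
  have E1 : comul u = ∑ p ∈ s, ∑ q ∈ s, ∑ m ∈ s, ∑ n ∈ s,
      (S (p.2 * m.2) * (p.1 * q.1)) ⊗ₜ[R] (S (q.2 * n.2) * (m.1 * n.1)) := by
    rw [stepA, stepB, stepC, fac1, fac2, stepE]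
    simp only [map_sum]
    refine Finset.sum_congr rfl fun p _ => Finset.sum_congr rfl fun q _ =>
      Finset.sum_congr rfl fun m _ => Finset.sum_congr rfl fun n _ => ?_
    rw [hPsi, TensorProduct.map_tmul, Algebra.TensorProduct.comm_tmul,
      Algebra.TensorProduct.tmul_mul_tmul]
  -- contract the p-sum and use u h = S²(h) u
  have E2 : comul u = ∑ q ∈ s, ∑ m ∈ s, ∑ n ∈ s,
      (S m.2 * (S (S q.1) * u)) ⊗ₜ[R] (S n.2 * (S q.2 * (m.1 * n.1))) := by
    rw [E1, Finset.sum_comm]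
    refine Finset.sum_congr rfl fun q _ => ?_
    rw [Finset.sum_comm]
    refine Finset.sum_congr rfl fun m _ => ?_
    rw [Finset.sum_comm]
    refine Finset.sum_congr rfl fun n _ => ?_
    -- now: ∑ p, (S (p.2*m.2) * (p.1*q.1)) ⊗ₜ (S (q.2*n.2) * (m.1*n.1)) = single term
    rw [← TensorProduct.sum_tmul]
    have hfirst : (∑ p ∈ s, S (p.2 * m.2) * (p.1 * q.1)) = S m.2 * (S (S q.1) * u) := by
      calc (∑ p ∈ s, S (p.2 * m.2) * (p.1 * q.1))
          = ∑ p ∈ s, S m.2 * ((S p.2 * p.1) * q.1) := by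
            refine Finset.sum_congr rfl fun p _ => ?_
            rw [hS_antimul]
            simp only [mul_assoc]
        _ = S m.2 * ((∑ p ∈ s, S p.2 * p.1) * q.1) := by
            rw [← Finset.mul_sum, ← Finset.sum_mul]
        _ = S m.2 * (u * q.1) := by rw [← hu]
        _ = S m.2 * (S (S q.1) * u) := by rw [hK q.1]
    rw [hfirst, hS_antimul]
    simp only [mul_assoc]
  -- pull out R⁻¹ via the q-sum
  have E3 : comul u = ∑ m ∈ s, ∑ n ∈ s,
      (S m.2 ⊗ₜ[R] S n.2) * Rminv * (u ⊗ₜ[R] (m.1 * n.1)) := by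
    rw [E2, Finset.sum_comm]
    refine Finset.sum_congr rfl fun m _ => ?_
    rw [Finset.sum_comm]
    refine Finset.sum_congr rfl fun n _ => ?_
    conv_rhs => rw [← L5]
    rw [Finset.mul_sum, Finset.sum_mul]
    refine Finset.sum_congr rfl fun q _ => ?_
    rw [Algebra.TensorProduct.tmul_mul_tmul, Algebra.TensorProduct.tmul_mul_tmul]
    simp only [mul_assoc]
  have intw : ∀ y : H, comul y * Rminv
      = Rminv * (Algebra.TensorProduct.comm R H H) (comul y) := by
    intro y
    calc comul y * Rminv = (Rminv * Rm) * comul y * Rminv := by rw [hinv2, one_mul]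
      _ = Rminv * ((Rm * comul y) * Rminv) := by
          rw [mul_assoc Rminv Rm (comul y), mul_assoc]
      _ = Rminv * (((Algebra.TensorProduct.comm R H H) (comul y) * Rm) * Rminv) := by
          rw [hRm_intertwine y]
      _ = Rminv * ((Algebra.TensorProduct.comm R H H) (comul y) * (Rm * Rminv)) := by
          rw [mul_assoc]
      _ = Rminv * (Algebra.TensorProduct.comm R H H) (comul y) := by
          rw [hinv1, mul_one]
  have kap : (∑ m ∈ s, ∑ n ∈ s, (S m.2 ⊗ₜ[R] S n.2) ⊗ₜ[R] (m.1 * n.1))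
      = ∑ p ∈ s, comul (S p.2) ⊗ₜ[R] p.1 := by
    have h := congrArg ((LinearMap.rTensor H
        ((Algebra.TensorProduct.comm R H H).toLinearMap ∘ₗ TensorProduct.map S S)) ∘ₗ
        (TensorProduct.comm R H (H ⊗[R] H)).toLinearMap) eq2
    simp only [map_sum, LinearMap.coe_comp, Function.comp_apply, LinearEquiv.coe_coe,
      TensorProduct.comm_tmul, LinearMap.rTensor_tmul, TensorProduct.map_tmul,
      AlgEquiv.toLinearMap_apply, Algebra.TensorProduct.comm_tmul,
      AlgEquiv.coe_toLinearEquiv] at h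
    rw [← h]
    exact Finset.sum_congr rfl fun p _ => by rw [← L10 p.2]
  have E4 : comul u = ∑ p ∈ s, comul (S p.2) * (Rminv * (u ⊗ₜ[R] p.1)) := by
    rw [E3]
    have h := congrArg (mulLin (LinearMap.id : H ⊗[R] H →ₗ[R] H ⊗[R] H)
       (LinearMap.mulLeft R Rminv ∘ₗ TensorProduct.mk R H H u)) kap
    simp only [map_sum, mulLin_tmul, LinearMap.id_apply, LinearMap.coe_comp,
      Function.comp_apply, TensorProduct.mk_apply, LinearMap.mulLeft_apply] at h
    rw [← h]
    exact Finset.sum_congr rfl fun m _ => Finset.sum_congr rfl fun n _ => by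
      rw [mul_assoc]
  have E5 : comul u
      = Rminv * ∑ p ∈ s, (TensorProduct.map S S) (comul p.2) * (u ⊗ₜ[R] p.1) := by
    rw [E4, Finset.mul_sum]
    refine Finset.sum_congr rfl fun p _ => ?_
    rw [← mul_assoc, intw (S p.2), mul_assoc]
    congr 2
    rw [L10 p.2, sigsig]
  have E6 : (∑ p ∈ s, (TensorProduct.map S S) (comul p.2) * (u ⊗ₜ[R] p.1))
      = (Algebra.TensorProduct.comm R H H) Rminv * (u ⊗ₜ[R] u) := by
    have h := congrArg ((mulLin (TensorProduct.map S S) (TensorProduct.mk R H H u)) ∘ₗ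
      (TensorProduct.comm R H (H ⊗[R] H)).toLinearMap) eq2
    simp only [map_sum, LinearMap.coe_comp, Function.comp_apply, LinearEquiv.coe_coe,
      TensorProduct.comm_tmul, mulLin_tmul, TensorProduct.mk_apply] at h
    rw [h, Finset.sum_comm]
    calc (∑ q ∈ s, ∑ p ∈ s, (TensorProduct.map S S) (q.2 ⊗ₜ[R] p.2) * (u ⊗ₜ[R] (p.1 * q.1)))
        = ∑ q ∈ s, (S q.2 ⊗ₜ[R] S (S q.1)) * (u ⊗ₜ[R] u) := by
          refine Finset.sum_congr rfl fun q _ => ?_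
          calc (∑ p ∈ s, (TensorProduct.map S S) (q.2 ⊗ₜ[R] p.2) * (u ⊗ₜ[R] (p.1 * q.1)))
              = ∑ p ∈ s, (S q.2 * u) ⊗ₜ[R] (S p.2 * (p.1 * q.1)) := by
                refine Finset.sum_congr rfl fun p _ => ?_
                rw [TensorProduct.map_tmul, Algebra.TensorProduct.tmul_mul_tmul]
            _ = (S q.2 * u) ⊗ₜ[R] (∑ p ∈ s, S p.2 * (p.1 * q.1)) := by
                rw [TensorProduct.tmul_sum]
            _ = (S q.2 * u) ⊗ₜ[R] (u * q.1) := by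
                congr 1
                calc (∑ p ∈ s, S p.2 * (p.1 * q.1)) = (∑ p ∈ s, S p.2 * p.1) * q.1 := by
                      rw [Finset.sum_mul]
                      exact Finset.sum_congr rfl fun p _ => by rw [mul_assoc]
                  _ = u * q.1 := by rw [← hu]
            _ = (S q.2 ⊗ₜ[R] S (S q.1)) * (u ⊗ₜ[R] u) := by
                rw [hK q.1, Algebra.TensorProduct.tmul_mul_tmul]
      _ = (Algebra.TensorProduct.comm R H H) Rminv * (u ⊗ₜ[R] u) := by
          rw [← Finset.sum_mul, L6]
  have G2 : comul u = RRinv * (u ⊗ₜ[R] u) := by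
    rw [E5, E6, hRR, mul_assoc]
  -- the remaining conjuncts
  have G3 : comul u = (u ⊗ₜ[R] u) * RRinv := by
    rw [F1 RRinv, mS2RRinv]
    exact G2
  have mSSu : (TensorProduct.map S S) (u ⊗ₜ[R] u) = S u ⊗ₜ[R] S u := by
    rw [TensorProduct.map_tmul]
  have hmSSRRinv : (TensorProduct.map S S) RRinv
      = (Algebra.TensorProduct.comm R H H) Rminv * Rminv := by
    rw [hRR, AM, mSScRminv, mSSRminv]
  have hDSu : comul (S u) = RRinv * (S u ⊗ₜ[R] S u) := by
    rw [L10 u]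
    conv_lhs => rw [G3]
    rw [AM, hmSSRRinv, mSSu, map_mul, map_mul, sigsig, Algebra.TensorProduct.comm_tmul,
      hRR]
  have G4 : comul (u * S u)
      = (RRinv * RRinv) * ((u ⊗ₜ[R] u) * (TensorProduct.map S S) (u ⊗ₜ[R] u)) := by
    rw [map_mul, hDSu, mSSu]
    conv_lhs => rw [G3]
    calc ((u ⊗ₜ[R] u) * RRinv) * (RRinv * (S u ⊗ₜ[R] S u))
        = ((u ⊗ₜ[R] u) * (RRinv * RRinv)) * (S u ⊗ₜ[R] S u) := by
          rw [mul_assoc, ← mul_assoc RRinv RRinv (S u ⊗ₜ[R] S u), ← mul_assoc]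
      _ = ((RRinv * RRinv) * (u ⊗ₜ[R] u)) * (S u ⊗ₜ[R] S u) := by
          rw [F1 (RRinv * RRinv), mS2mul, mS2RRinv]
      _ = (RRinv * RRinv) * ((u ⊗ₜ[R] u) * (S u ⊗ₜ[R] S u)) := by rw [mul_assoc]
  exact ⟨Gcounit, G2, G3, G4⟩
end
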